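/- arXiv:2504.10206 — 2 statements merged into one kernel-verified Lean document; each statement's English description precedes it below -/
import Mathlib

section
/- Let d ∈ ℕ, d ≥ 1, 1 ≤ q ≤ p < ∞ and r ∈ ℕ. If f ∈ Λ^{p,q} is bounded and locally Riemann integrable on ℝ×ℝ^d (i.e. Riemann integrable on every compact box), then lim_{δ→0+} τ_r(f; δ; ℝ×ℝ^d)_{p,q} = 0. -/
open MeasureTheory Filter Set Asymptotics
open Topology
open scoped ENNReal NNReal

noncomputable section

/-- An admissible partition of `ℝ × ℝ^d`: strictly increasing doubly-infinite sequences of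
nodes in the first variable and in each of the `d` remaining variables, whose consecutive
gaps are bounded below by a positive constant `Δlo` and above by a finite constant `Δhi`. -/
structure AdmissiblePartition (d : ℕ) where
  /-- nodes in the first variable -/
  x : ℤ → ℝ
  /-- nodes in the `i`-th of the remaining `d` variables -/
  y : Fin d → ℤ → ℝ
  /-- a lower mesh bound -/
  Δlo : ℝ
  /-- an upper mesh bound -/
  Δhi : ℝ
  Δlo_pos : 0 < Δlo
  xgap_lo : ∀ k : ℤ, Δlo ≤ x k - x (k - 1)
  xgap_hi : ∀ k : ℤ, x k - x (k - 1) ≤ Δhi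
  ygap_lo : ∀ i, ∀ j : ℤ, Δlo ≤ y i j - y i (j - 1)
  ygap_hi : ∀ i, ∀ j : ℤ, y i j - y i (j - 1) ≤ Δhi

/-- The half-open cell `Q_{jk} = [x_{k-1}, x_k) × ∏ i, [y_{i,jᵢ-1}, y_{i,jᵢ})` of an
admissible partition. -/
def cell {d : ℕ} (P : AdmissiblePartition d) (k : ℤ) (j : Fin d → ℤ) :
    Set (ℝ × (Fin d → ℝ)) :=
  {z | z.1 ∈ Set.Ico (P.x (k - 1)) (P.x k) ∧
    ∀ i, z.2 i ∈ Set.Ico (P.y i (j i - 1)) (P.y i (j i))}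

/-- The volume `Δ_{jk}` of the cell `Q_{jk}`. -/
def cellVol {d : ℕ} (P : AdmissiblePartition d) (k : ℤ) (j : Fin d → ℤ) : ℝ :=
  (P.x k - P.x (k - 1)) * ∏ i, (P.y i (j i) - P.y i (j i - 1))

/-- The discrete mixed `ℓ^{p,q}(Σ)` norm of `f : ℝ × ℝ^d → ℂ` with respect to an
admissible partition:
`‖f‖ = (∑_k (∑_j sup_{Q_{jk}} |f|^q · Δ_{jk})^{p/q})^{1/p}` (valued in `ℝ≥0∞`). -/
def discNorm (d : ℕ) (p q : ℝ) (P : AdmissiblePartition d)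
    (f : ℝ × (Fin d → ℝ) → ℂ) : ℝ≥0∞ :=
  (∑' k : ℤ, (∑' j : Fin d → ℤ,
      (⨆ z ∈ cell P k j, ENNReal.ofReal ‖f z‖) ^ q *
        ENNReal.ofReal (cellVol P k j)) ^ (p / q)) ^ (1 / p)

/-- Membership in `Λ^{p,q}`: `f` is measurable and has finite discrete mixed norm with
respect to every admissible partition. -/
def MemLambda (d : ℕ) (p q : ℝ) (f : ℝ × (Fin d → ℝ) → ℂ) : Prop :=
  Measurable f ∧ ∀ P : AdmissiblePartition d, discNorm d p q P f < ⊤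

/-- The `r`-th finite difference of `f : ℝ × ℝ^d → ℂ` with step `h` in every coordinate. -/
def fdiffC (d r : ℕ) (h : ℝ) (f : ℝ × (Fin d → ℝ) → ℂ) (z : ℝ × (Fin d → ℝ)) : ℂ :=
  ∑ j ∈ Finset.range (r + 1),
    ((-1 : ℂ) ^ (r - j) * (r.choose j : ℂ)) * f (z.1 + j * h, fun i => z.2 i + j * h)

/-- The local modulus of smoothness of order `r` of `f : ℝ × ℝ^d → ℂ` on all of
`ℝ × ℝ^d` at the point `z`, for `δ ≥ 0` (valued in `ℝ≥0∞`). -/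
def locModC (d r : ℕ) (f : ℝ × (Fin d → ℝ) → ℂ) (δ : ℝ) (z : ℝ × (Fin d → ℝ)) : ℝ≥0∞ :=
  ⨆ (h : ℝ) (t : ℝ) (s : Fin d → ℝ)
    (_ : t ∈ Set.Icc (z.1 - r * δ / 2) (z.1 + r * δ / 2))
    (_ : t + r * h ∈ Set.Icc (z.1 - r * δ / 2) (z.1 + r * δ / 2))
    (_ : ∀ i, s i ∈ Set.Icc (z.2 i - r * δ / 2) (z.2 i + r * δ / 2))
    (_ : ∀ i, s i + r * h ∈ Set.Icc (z.2 i - r * δ / 2) (z.2 i + r * δ / 2)),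
    ENNReal.ofReal ‖fdiffC d r h f (t, s)‖

/-- The `L^{p,q}`-averaged modulus of smoothness of order `r` of `f : ℝ × ℝ^d → ℂ`:
`τ_r(f;δ;ℝ×ℝ^d)_{p,q} = ‖ω_r(f,·;δ)‖_{L^{p,q}}`. -/
def tauModC (d r : ℕ) (p q : ℝ) (f : ℝ × (Fin d → ℝ) → ℂ) (δ : ℝ) : ℝ≥0∞ :=
  (∫⁻ x : ℝ, (∫⁻ y : Fin d → ℝ, (locModC d r f δ (x, y)) ^ q) ^ (p / q)) ^ (1 / p)

/-- Riemann integrability of `f : ℝ × ℝ^d → ℂ` on the nondegenerate compact box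
`[a,b] × ∏ i, [c i, d i]`, via Riemann box integration on `ℝ^{d+1}`. -/
def RiemannIntegrableOn (d : ℕ) (f : ℝ × (Fin d → ℝ) → ℂ) (a b : ℝ) (c dd : Fin d → ℝ)
    (hab : a < b) (hcd : ∀ i, c i < dd i) : Prop :=
  BoxIntegral.Integrable
    (⟨Fin.cons a c, Fin.cons b dd, by
        intro i
        induction i using Fin.cases with
        | zero => simpa using hab
        | succ j => simpa using hcd j⟩ : BoxIntegral.Box (Fin (d + 1)))
    BoxIntegral.IntegrationParams.Riemann
    (fun v => f (v 0, fun i => v i.succ))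
    MeasureTheory.volume.toBoxAdditive.toSMul

/-! ## Auxiliary development -/

namespace TauAux

variable {d : ℕ}

/-- indicator of membership in `Ico (k-1) k` via floor -/
lemma mem_Ico_iff_floor {k : ℤ} {x : ℝ} :
    x ∈ Set.Ico ((k : ℝ) - 1) (k : ℝ) ↔ ⌊x⌋ + 1 = k := by
  constructor
  · rintro ⟨h1, h2⟩
    have : ⌊x⌋ = k - 1 := by
      rw [Int.floor_eq_iff] <;> push_cast <;> constructor <;> linarith
    omega
  · intro h
    have hk : (k : ℝ) - 1 = (⌊x⌋ : ℤ) := by push_cast [← h]; ring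
    constructor
    · rw [hk]; exact_mod_cast Int.floor_le x
    · have : (k : ℝ) = (⌊x⌋ : ℝ) + 1 := by push_cast [← h]; ring
      rw [this]; exact Int.lt_floor_add_one x

/-- The unit admissible partition. -/
def unitPart (d : ℕ) : AdmissiblePartition d where
  x := fun k => (k : ℝ)
  y := fun _ j => (j : ℝ)
  Δlo := 1
  Δhi := 1
  Δlo_pos := one_pos
  xgap_lo := by intro k; push_cast; linarith
  xgap_hi := by intro k; push_cast; linarith
  ygap_lo := by intro i j; push_cast; linarith
  ygap_hi := by intro i j; push_cast; linarith

lemma mem_unitCell_iff {k : ℤ} {j : Fin d → ℤ} {z : ℝ × (Fin d → ℝ)} :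
    z ∈ cell (unitPart d) k j ↔ (⌊z.1⌋ + 1 = k ∧ ∀ i, ⌊z.2 i⌋ + 1 = j i) := by
  unfold cell unitPart
  simp only [Set.mem_setOf_eq, Int.cast_sub, Int.cast_one]
  constructor
  · rintro ⟨h1, h2⟩
    exact ⟨mem_Ico_iff_floor.1 h1, fun i => mem_Ico_iff_floor.1 (h2 i)⟩
  · rintro ⟨h1, h2⟩
    exact ⟨mem_Ico_iff_floor.2 h1, fun i => mem_Ico_iff_floor.2 (h2 i)⟩

def cellSup (d : ℕ) (f : ℝ × (Fin d → ℝ) → ℂ) (k : ℤ) (j : Fin d → ℤ) : ℝ≥0∞ :=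
  ⨆ z ∈ cell (unitPart d) k j, ENNReal.ofReal ‖f z‖

def idx1 (z : ℝ × (Fin d → ℝ)) : ℤ × (Fin d → ℤ) := (⌊z.1⌋ + 1, fun i => ⌊z.2 i⌋ + 1)

lemma mem_cell_idx1 (z : ℝ × (Fin d → ℝ)) : z ∈ cell (unitPart d) (idx1 z).1 (idx1 z).2 :=
  mem_unitCell_iff.2 ⟨rfl, fun _ => rfl⟩

lemma measurable_idx1 : Measurable (idx1 (d := d)) := by
  apply Measurable.prod
  · exact (Int.measurable_floor.comp measurable_fst).add_const 1
  · exact measurable_pi_lambda _ fun i =>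
      (Int.measurable_floor.comp ((measurable_pi_apply i).comp measurable_snd)).add_const 1

/-- shift set -/
def SH (d : ℕ) : Finset (ℤ × (Fin d → ℤ)) :=
  (Finset.Icc (-1 : ℤ) 1) ×ˢ (Fintype.piFinset fun _ => Finset.Icc (-1 : ℤ) 1)

def FF (d : ℕ) (f : ℝ × (Fin d → ℝ) → ℂ) (σ : ℤ × (Fin d → ℤ))
    (z : ℝ × (Fin d → ℝ)) : ℝ≥0∞ :=
  cellSup d f ((idx1 z).1 + σ.1) (fun i => (idx1 z).2 i + σ.2 i)

lemma measurable_FF (f : ℝ × (Fin d → ℝ) → ℂ) (σ : ℤ × (Fin d → ℤ)) :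
    Measurable (FF d f σ) :=
  (measurable_of_countable fun c : ℤ × (Fin d → ℤ) =>
    cellSup d f (c.1 + σ.1) (fun i => c.2 i + σ.2 i)).comp measurable_idx1

/-- oscillation over a set -/
def oscB (f : ℝ × (Fin d → ℝ) → ℂ) (S : Set (ℝ × (Fin d → ℝ))) : ℝ≥0∞ :=
  ⨆ u ∈ S, ⨆ v ∈ S, ENNReal.ofReal ‖f u - f v‖

def BnI (d : ℕ) (n : ℕ) (c : ℤ × (Fin d → ℤ)) : Set (ℝ × (Fin d → ℝ)) :=
  {w | (((c.1 : ℝ) - 1) / n ≤ w.1 ∧ w.1 ≤ ((c.1 : ℝ) + 2) / n) ∧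
    ∀ i, ((c.2 i : ℝ) - 1) / n ≤ w.2 i ∧ w.2 i ≤ ((c.2 i : ℝ) + 2) / n}

def idxN (d n : ℕ) (z : ℝ × (Fin d → ℝ)) : ℤ × (Fin d → ℤ) :=
  (⌊(n : ℝ) * z.1⌋, fun i => ⌊(n : ℝ) * z.2 i⌋)

def OscN (d n : ℕ) (f : ℝ × (Fin d → ℝ) → ℂ) (z : ℝ × (Fin d → ℝ)) : ℝ≥0∞ :=
  oscB f (BnI d n (idxN d n z))

lemma measurable_OscN (n : ℕ) (f : ℝ × (Fin d → ℝ) → ℂ) : Measurable (OscN d n f) := by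
  have h1 : Measurable (idxN d n : ℝ × (Fin d → ℝ) → ℤ × (Fin d → ℤ)) := by
    apply Measurable.prod
    · exact Int.measurable_floor.comp (measurable_fst.const_mul _)
    · exact measurable_pi_lambda _ fun i =>
        Int.measurable_floor.comp (((measurable_pi_apply i).comp measurable_snd).const_mul _)
  exact (measurable_of_countable fun c => oscB f (BnI d n c)).comp h1

/-- basic interval facts about `BnI` -/
lemma self_mem_BnI {n : ℕ} (hn : 1 ≤ n) (z : ℝ × (Fin d → ℝ)) :
    z ∈ BnI d n (idxN d n z) := by
  have hn' : (0 : ℝ) < n := by exact_mod_cast hn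
  simp only [BnI, idxN, Set.mem_setOf_eq]
  constructor
  · constructor
    · rw [div_le_iff₀ hn']; have := Int.floor_le ((n : ℝ) * z.1); linarith
    · rw [le_div_iff₀ hn']; have := Int.lt_floor_add_one ((n : ℝ) * z.1); linarith
  · intro i
    constructor
    · rw [div_le_iff₀ hn']; have := Int.floor_le ((n : ℝ) * z.2 i); linarith
    · rw [le_div_iff₀ hn']; have := Int.lt_floor_add_one ((n : ℝ) * z.2 i); linarith

lemma BnI_subset_ball {n : ℕ} (hn : 1 ≤ n) (z : ℝ × (Fin d → ℝ)) :
    ∀ w ∈ BnI d n (idxN d n z),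
      |w.1 - z.1| ≤ 2 / n ∧ ∀ i, |w.2 i - z.2 i| ≤ 2 / n := by
  intro w hw
  have hn' : (0 : ℝ) < n := by exact_mod_cast hn
  simp only [BnI, idxN, Set.mem_setOf_eq] at hw
  constructor
  · have h1 := hw.1.1; have h2 := hw.1.2
    have l1 := Int.floor_le ((n : ℝ) * z.1)
    have l2 := Int.lt_floor_add_one ((n : ℝ) * z.1)
    rw [div_le_iff₀ hn'] at h1
    rw [le_div_iff₀ hn'] at h2
    have hu : w.1 - z.1 ≤ 2 / n := by rw [le_div_iff₀ hn']; nlinarith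
    have hl : -(2 / (n:ℝ)) ≤ w.1 - z.1 := by
      rw [neg_le, neg_sub, le_div_iff₀ hn']; nlinarith
    exact abs_le.2 ⟨hl, hu⟩
  · intro i
    have h1 := (hw.2 i).1; have h2 := (hw.2 i).2
    have l1 := Int.floor_le ((n : ℝ) * z.2 i)
    have l2 := Int.lt_floor_add_one ((n : ℝ) * z.2 i)
    rw [div_le_iff₀ hn'] at h1
    rw [le_div_iff₀ hn'] at h2
    have hu : w.2 i - z.2 i ≤ 2 / n := by rw [le_div_iff₀ hn']; nlinarith
    have hl : -(2 / (n:ℝ)) ≤ w.2 i - z.2 i := by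
      rw [neg_le, neg_sub, le_div_iff₀ hn']; nlinarith
    exact abs_le.2 ⟨hl, hu⟩


lemma alt_sum_choose {r : ℕ} (hr : 1 ≤ r) :
    ∑ j ∈ Finset.range (r + 1), ((-1 : ℂ) ^ (r - j) * (r.choose j : ℂ)) = 0 := by
  have h := add_pow (1 : ℂ) (-1) r
  have h0 : ((1 : ℂ) + -1) = 0 := by ring
  rw [h0, zero_pow (by omega : r ≠ 0)] at h
  simpa using h.symm

lemma le_OscN_of_mem {n : ℕ} (f : ℝ × (Fin d → ℝ) → ℂ) {z u v : ℝ × (Fin d → ℝ)}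
    (hu : u ∈ BnI d n (idxN d n z)) (hv : v ∈ BnI d n (idxN d n z)) :
    ENNReal.ofReal ‖f u - f v‖ ≤ OscN d n f z := by
  have h1 : ENNReal.ofReal ‖f u - f v‖ ≤ ⨆ v' ∈ BnI d n (idxN d n z), ENNReal.ofReal ‖f u - f v'‖ :=
    le_biSup (fun v' => ENNReal.ofReal ‖f u - f v'‖) hv
  exact le_trans h1 (le_biSup (fun u' => ⨆ v' ∈ BnI d n (idxN d n z), ENNReal.ofReal ‖f u' - f v'‖) hu)

/-- key pointwise estimate : the local modulus is controlled by the grid oscillation -/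
lemma locModC_le_OscN {r n : ℕ} (hr : 1 ≤ r) (hn : 1 ≤ n)
    (f : ℝ × (Fin d → ℝ) → ℂ) {δ : ℝ}
    (hδ : (r : ℝ) * δ / 2 ≤ 1 / n) (z : ℝ × (Fin d → ℝ)) :
    locModC d r f δ z ≤ (2 ^ r : ℝ≥0∞) * OscN d n f z := by
  refine iSup_le fun h => iSup_le fun t => iSup_le fun s => iSup_le fun h1 => iSup_le fun h2 =>
    iSup_le fun h3 => iSup_le fun h4 => ?_
  have hn' : (0 : ℝ) < n := by exact_mod_cast hn
  have hnrδ : (n : ℝ) * ((r : ℝ) * δ / 2) ≤ 1 := by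
    rw [mul_comm, ← le_div_iff₀ hn']; exact hδ
  have hIcc : ∀ a w : ℝ, a - (r : ℝ) * δ / 2 ≤ w → w ≤ a + (r : ℝ) * δ / 2 →
      ((⌊(n : ℝ) * a⌋ : ℝ) - 1) / n ≤ w ∧ w ≤ ((⌊(n : ℝ) * a⌋ : ℝ) + 2) / n := by
    intro a w hw1 hw2
    have l1 := Int.floor_le ((n : ℝ) * a)
    have l2 := Int.lt_floor_add_one ((n : ℝ) * a)
    have m1 := mul_le_mul_of_nonneg_right hw1 hn'.le
    have m2 := mul_le_mul_of_nonneg_right hw2 hn'.le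
    constructor
    · rw [div_le_iff₀ hn']; nlinarith
    · rw [le_div_iff₀ hn']; nlinarith
  -- each evaluation point lies in Bn
  have hpt : ∀ j ∈ Finset.range (r + 1),
      ((t + (j : ℝ) * h, fun i => s i + (j : ℝ) * h) : ℝ × (Fin d → ℝ)) ∈
        BnI d n (idxN d n z) := by
    intro j hj
    have hjr : (j : ℝ) ≤ (r : ℝ) := by
      exact_mod_cast Nat.le_of_lt_succ (Finset.mem_range.1 hj)
    have hj0 : (0 : ℝ) ≤ (j : ℝ) := Nat.cast_nonneg j
    have hbtw : ∀ a : ℝ, a - (r : ℝ) * δ / 2 ≤ a + 0 → True := fun _ _ => trivial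
    have hjh : min 0 ((r : ℝ) * h) ≤ (j : ℝ) * h ∧ (j : ℝ) * h ≤ max 0 ((r : ℝ) * h) := by
      rcases le_or_gt 0 h with hh | hh
      · constructor
        · exact le_trans (min_le_left _ _) (mul_nonneg hj0 hh)
        · exact le_trans (mul_le_mul_of_nonneg_right hjr hh) (le_max_right _ _)
      · constructor
        · exact le_trans (min_le_right _ _) (mul_le_mul_of_nonpos_right hjr hh.le)
        · exact le_trans (mul_nonpos_of_nonneg_of_nonpos hj0 hh.le) (le_max_left _ _)
    simp only [BnI, idxN, Set.mem_setOf_eq]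
    constructor
    · refine hIcc z.1 _ ?_ ?_
      · rcases le_or_gt 0 ((r:ℝ) * h) with hrh | hrh
        · have : min 0 ((r:ℝ)*h) = 0 := min_eq_left hrh
          rw [this] at hjh; linarith [h1.1, hjh.1]
        · have : min 0 ((r:ℝ)*h) = (r:ℝ)*h := min_eq_right hrh.le
          rw [this] at hjh; linarith [h2.1, hjh.1]
      · rcases le_or_gt 0 ((r:ℝ) * h) with hrh | hrh
        · have : max 0 ((r:ℝ)*h) = (r:ℝ)*h := max_eq_right hrh
          rw [this] at hjh; linarith [h2.2, hjh.2]
        · have : max 0 ((r:ℝ)*h) = 0 := max_eq_left hrh.le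
          rw [this] at hjh; linarith [h1.2, hjh.2]
    · intro i
      refine hIcc (z.2 i) _ ?_ ?_
      · rcases le_or_gt 0 ((r:ℝ) * h) with hrh | hrh
        · have : min 0 ((r:ℝ)*h) = 0 := min_eq_left hrh
          rw [this] at hjh; linarith [(h3 i).1, hjh.1]
        · have : min 0 ((r:ℝ)*h) = (r:ℝ)*h := min_eq_right hrh.le
          rw [this] at hjh; linarith [(h4 i).1, hjh.1]
      · rcases le_or_gt 0 ((r:ℝ) * h) with hrh | hrh
        · have : max 0 ((r:ℝ)*h) = (r:ℝ)*h := max_eq_right hrh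
          rw [this] at hjh; linarith [(h4 i).2, hjh.2]
        · have : max 0 ((r:ℝ)*h) = 0 := max_eq_left hrh.le
          rw [this] at hjh; linarith [(h3 i).2, hjh.2]
  -- rewrite the finite difference
  set pt : ℕ → ℝ × (Fin d → ℝ) := fun j => (t + (j : ℝ) * h, fun i => s i + (j : ℝ) * h)
  have hsplit : fdiffC d r h f (t, s) =
      ∑ j ∈ Finset.range (r + 1), ((-1 : ℂ) ^ (r - j) * (r.choose j : ℂ)) * (f (pt j) - f z) := by
    simp only [mul_sub]
    rw [Finset.sum_sub_distrib, ← Finset.sum_mul, alt_sum_choose hr, zero_mul, sub_zero]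
    rfl
  have hnormle : ‖fdiffC d r h f (t, s)‖ ≤
      ∑ j ∈ Finset.range (r + 1), (r.choose j : ℝ) * ‖f (pt j) - f z‖ := by
    rw [hsplit]
    refine le_trans (norm_sum_le _ _) (Finset.sum_le_sum fun j hj => ?_)
    rw [norm_mul, norm_mul, norm_pow, norm_neg, norm_one, one_pow, one_mul]
    simp
  calc ENNReal.ofReal ‖fdiffC d r h f (t, s)‖
      ≤ ENNReal.ofReal (∑ j ∈ Finset.range (r + 1), (r.choose j : ℝ) * ‖f (pt j) - f z‖) :=
        ENNReal.ofReal_le_ofReal hnormle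
    _ = ∑ j ∈ Finset.range (r + 1), ENNReal.ofReal ((r.choose j : ℝ) * ‖f (pt j) - f z‖) :=
        ENNReal.ofReal_sum_of_nonneg fun j _ => by positivity
    _ = ∑ j ∈ Finset.range (r + 1), (r.choose j : ℝ≥0∞) * ENNReal.ofReal ‖f (pt j) - f z‖ := by
        refine Finset.sum_congr rfl fun j _ => ?_
        rw [ENNReal.ofReal_mul (by positivity)]
        congr 1
        simp [ENNReal.ofReal_natCast]
    _ ≤ ∑ j ∈ Finset.range (r + 1), (r.choose j : ℝ≥0∞) * OscN d n f z := by
        refine Finset.sum_le_sum fun j hj => ?_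
        exact mul_le_mul_right (le_OscN_of_mem f (hpt j hj) (self_mem_BnI hn z)) _
    _ = (∑ j ∈ Finset.range (r + 1), (r.choose j : ℝ≥0∞)) * OscN d n f z :=
        (Finset.sum_mul _ _ _).symm
    _ = (2 ^ r : ℝ≥0∞) * OscN d n f z := by
        congr 1
        rw [← Nat.cast_sum]
        rw [Nat.sum_range_choose]
        simp

lemma le_cellSup {f : ℝ × (Fin d → ℝ) → ℂ} {k : ℤ} {j : Fin d → ℤ}
    {w : ℝ × (Fin d → ℝ)} (hw : w ∈ cell (unitPart d) k j) :
    ENNReal.ofReal ‖f w‖ ≤ cellSup d f k j :=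
  le_biSup (fun w' => ENNReal.ofReal ‖f w'‖) hw

lemma zero_mem_SH : ((0, 0) : ℤ × (Fin d → ℤ)) ∈ SH d := by
  simp [SH, Finset.mem_product, Fintype.mem_piFinset]

/-- covering: points of `BnI n (idxN n z)` (n ≥ 2) lie in neighbour unit cells of z -/
lemma ofReal_le_sup_FF {n : ℕ} (hn : 2 ≤ n) (f : ℝ × (Fin d → ℝ) → ℂ)
    (z : ℝ × (Fin d → ℝ)) {w : ℝ × (Fin d → ℝ)} (hw : w ∈ BnI d n (idxN d n z)) :
    ENNReal.ofReal ‖f w‖ ≤ (SH d).sup (fun σ => FF d f σ z) := by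
  obtain ⟨hb1, hb2⟩ := BnI_subset_ball (by omega) z w hw
  have h2n : 2 / (n : ℝ) ≤ 1 := by
    rw [div_le_one (by positivity)]; exact_mod_cast hn
  set σ : ℤ × (Fin d → ℤ) := ((idx1 w).1 - (idx1 z).1, fun i => (idx1 w).2 i - (idx1 z).2 i)
  have hfloor : ∀ a b : ℝ, |a - b| ≤ 1 → (⌊a⌋ - ⌊b⌋ = -1 ∨ ⌊a⌋ - ⌊b⌋ = 0 ∨ ⌊a⌋ - ⌊b⌋ = 1) := by
    intro a b hab
    rw [abs_le] at hab
    have hu : ⌊a⌋ ≤ ⌊b + 1⌋ := Int.floor_le_floor (by linarith [hab.2])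
    have hl : ⌊b - 1⌋ ≤ ⌊a⌋ := Int.floor_le_floor (by linarith [hab.1])
    rw [show b + 1 = b + (1:ℤ) by push_cast; ring, Int.floor_add_intCast] at hu
    rw [show b - 1 = b - (1:ℤ) by push_cast; ring, Int.floor_sub_intCast] at hl
    omega
  have hσmem : σ ∈ SH d := by
    simp only [SH, Finset.mem_product, Fintype.mem_piFinset, Finset.mem_Icc]
    constructor
    · have := hfloor w.1 z.1 (le_trans hb1 h2n)
      simp only [σ, idx1]
      omega
    · intro i
      have := hfloor (w.2 i) (z.2 i) (le_trans (hb2 i) h2n)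
      simp only [σ, idx1]
      omega
  have hFF : FF d f σ z = cellSup d f (idx1 w).1 (idx1 w).2 := by
    simp only [FF, σ]
    congr 1 <;> [omega; (funext i; simp only [idx1]; omega)]
  calc ENNReal.ofReal ‖f w‖ ≤ cellSup d f (idx1 w).1 (idx1 w).2 := le_cellSup (mem_cell_idx1 w)
    _ = FF d f σ z := hFF.symm
    _ ≤ (SH d).sup (fun σ => FF d f σ z) := Finset.le_sup (f := fun σ => FF d f σ z) hσmem

lemma OscN_le_sup_FF {n : ℕ} (hn : 2 ≤ n) (f : ℝ × (Fin d → ℝ) → ℂ)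
    (z : ℝ × (Fin d → ℝ)) :
    OscN d n f z ≤ 2 * (SH d).sup (fun σ => FF d f σ z) := by
  refine iSup_le fun u => iSup_le fun hu => iSup_le fun v => iSup_le fun hv => ?_
  calc ENNReal.ofReal ‖f u - f v‖ ≤ ENNReal.ofReal (‖f u‖ + ‖f v‖) :=
        ENNReal.ofReal_le_ofReal (norm_sub_le _ _)
    _ ≤ ENNReal.ofReal ‖f u‖ + ENNReal.ofReal ‖f v‖ := ENNReal.ofReal_add_le
    _ ≤ (SH d).sup (fun σ => FF d f σ z) + (SH d).sup (fun σ => FF d f σ z) :=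
        add_le_add (ofReal_le_sup_FF hn f z hu) (ofReal_le_sup_FF hn f z hv)
    _ = 2 * (SH d).sup (fun σ => FF d f σ z) := (two_mul _).symm

lemma sup_rpow_le_sum {α : Type*} (s : Finset α) (F : α → ℝ≥0∞) {e : ℝ}
    (hs : s.Nonempty) : (s.sup F) ^ e ≤ ∑ a ∈ s, F a ^ e := by
  obtain ⟨a, ha, hFa⟩ := Finset.exists_mem_eq_sup s hs F
  rw [hFa]
  exact Finset.single_le_sum (f := fun a => F a ^ e) (fun b _ => zero_le) ha

/-- the dominating function -/
def Dom (d : ℕ) (q : ℝ) (f : ℝ × (Fin d → ℝ) → ℂ) (z : ℝ × (Fin d → ℝ)) : ℝ≥0∞ :=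
  ∑ σ ∈ SH d, FF d f σ z ^ q

lemma measurable_Dom (q : ℝ) (f : ℝ × (Fin d → ℝ) → ℂ) : Measurable (Dom d q f) := by
  exact Finset.measurable_sum _ fun σ _ => (measurable_FF f σ).pow_const q

lemma pow_OscN_le_Dom {r n : ℕ} (hn : 2 ≤ n) {q : ℝ} (hq : 0 ≤ q)
    (f : ℝ × (Fin d → ℝ) → ℂ) (z : ℝ × (Fin d → ℝ)) :
    ((2 ^ r : ℝ≥0∞) * OscN d n f z) ^ q ≤ (2 ^ (r + 1) : ℝ≥0∞) ^ q * Dom d q f z := by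
  have h1 : (2 ^ r : ℝ≥0∞) * OscN d n f z ≤
      (2 ^ (r + 1) : ℝ≥0∞) * (SH d).sup (fun σ => FF d f σ z) := by
    calc (2 ^ r : ℝ≥0∞) * OscN d n f z
        ≤ (2 ^ r : ℝ≥0∞) * (2 * (SH d).sup (fun σ => FF d f σ z)) :=
          mul_le_mul_right (OscN_le_sup_FF hn f z) _
      _ = (2 ^ (r + 1) : ℝ≥0∞) * (SH d).sup (fun σ => FF d f σ z) := by
          rw [← mul_assoc, pow_succ]
  calc ((2 ^ r : ℝ≥0∞) * OscN d n f z) ^ q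
      ≤ ((2 ^ (r + 1) : ℝ≥0∞) * (SH d).sup (fun σ => FF d f σ z)) ^ q :=
        ENNReal.rpow_le_rpow h1 hq
    _ = (2 ^ (r + 1) : ℝ≥0∞) ^ q * ((SH d).sup (fun σ => FF d f σ z)) ^ q :=
        ENNReal.mul_rpow_of_nonneg _ _ hq
    _ ≤ (2 ^ (r + 1) : ℝ≥0∞) ^ q * Dom d q f z := by
        refine mul_le_mul_right ?_ _
        exact sup_rpow_le_sum _ _ ⟨(0, 0), zero_mem_SH⟩

/-- pointwise convergence at continuity points -/
lemma tendsto_OscN {f : ℝ × (Fin d → ℝ) → ℂ} {z : ℝ × (Fin d → ℝ)}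
    (hz : ContinuousAt f z) :
    Tendsto (fun n : ℕ => OscN d (n + 2) f z) atTop (𝓝 0) := by
  rw [ENNReal.tendsto_nhds_zero]
  intro ε hε
  -- pick a real bound
  obtain ⟨e, he, hee⟩ : ∃ e : ℝ, 0 < e ∧ ENNReal.ofReal e ≤ ε := by
    rcases eq_or_ne ε ⊤ with rfl | hne
    · exact ⟨1, one_pos, le_top⟩
    · exact ⟨ε.toReal, ENNReal.toReal_pos hε.ne' hne,
        le_of_eq (ENNReal.ofReal_toReal hne)⟩
  rw [Metric.continuousAt_iff] at hz
  obtain ⟨δ, hδ, hball⟩ := hz (e / 2) (by positivity)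
  obtain ⟨N, hN⟩ := exists_nat_gt (2 / δ)
  filter_upwards [eventually_ge_atTop N] with n hn
  have hn2 : (2 : ℕ) ≤ n + 2 := by omega
  have hsmall : (2 : ℝ) / (n + 2 : ℕ) < δ := by
    have h1 : (2 : ℝ) / δ < (n + 2 : ℕ) := by
      have : (N : ℝ) ≤ (n + 2 : ℕ) := by exact_mod_cast by omega
      linarith
    rw [div_lt_iff₀ (by positivity)] at h1 ⊢
    · linarith [mul_comm δ ((n + 2 : ℕ) : ℝ)]
  have hdist : ∀ w ∈ BnI d (n + 2) (idxN d (n + 2) z), dist w z < δ := by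
    intro w hw
    obtain ⟨hb1, hb2⟩ := BnI_subset_ball (by omega) z w hw
    rw [Prod.dist_eq, max_lt_iff]
    constructor
    · rw [Real.dist_eq]; exact lt_of_le_of_lt hb1 hsmall
    · refine lt_of_le_of_lt ((dist_pi_le_iff (by positivity)).2 fun i => ?_) hsmall
      rw [Real.dist_eq]
      exact hb2 i
  refine iSup_le fun u => iSup_le fun hu => iSup_le fun v => iSup_le fun hv => ?_
  have h1 := hball (hdist u hu)
  have h2 := hball (hdist v hv)
  have : ‖f u - f v‖ ≤ e := by
    have htr : ‖f u - f v‖ ≤ ‖f u - f z‖ + ‖f z - f v‖ := norm_sub_le_norm_sub_add_norm_sub _ _ _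
    rw [dist_eq_norm] at h1 h2
    have h2' : ‖f z - f v‖ < e / 2 := by rw [norm_sub_rev]; exact h2
    linarith
  exact le_trans (ENNReal.ofReal_le_ofReal this) hee

/-! ### integral computations -/

lemma lintegral_fiber {α γ : Type*} [MeasurableSpace α] {μ : Measure α} [Countable γ]
    [MeasurableSpace γ] [MeasurableSingletonClass γ] {π : α → γ} (hπ : Measurable π)
    (hvol : ∀ k, μ (π ⁻¹' {k}) = 1) (c : γ → ℝ≥0∞) :
    ∫⁻ a, c (π a) ∂μ = ∑' k, c k := by
  have hcover : (Set.univ : Set α) = ⋃ k : γ, π ⁻¹' {k} := by ext a; simp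
  have hdisj : Pairwise (Function.onFun Disjoint fun k : γ => π ⁻¹' {k}) := by
    intro k l hkl
    exact Disjoint.preimage π (by simpa using hkl)
  rw [← setLIntegral_univ, hcover,
    lintegral_iUnion (fun k => hπ (measurableSet_singleton k)) hdisj]
  congr 1
  ext k
  rw [setLIntegral_congr_fun_ae (hπ (measurableSet_singleton k))
    (ae_of_all _ fun a ha => by
      simp only [Set.mem_preimage, Set.mem_singleton_iff] at ha
      rw [ha]), setLIntegral_const, hvol, mul_one]

lemma measurable_floorX : Measurable (fun x : ℝ => ⌊x⌋ + 1) :=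
  Int.measurable_floor.add_const 1

lemma measurable_floorY : Measurable (fun y : Fin d → ℝ => fun i => ⌊y i⌋ + 1) :=
  measurable_pi_lambda _ fun i => (Int.measurable_floor.comp (measurable_pi_apply i)).add_const 1

lemma volX_fiber (k : ℤ) : volume ((fun x : ℝ => ⌊x⌋ + 1) ⁻¹' {k}) = 1 := by
  have : (fun x : ℝ => ⌊x⌋ + 1) ⁻¹' {k} = Set.Ico ((k : ℝ) - 1) (k : ℝ) := by
    ext x
    simp only [Set.mem_preimage, Set.mem_singleton_iff]
    exact (mem_Ico_iff_floor).symm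
  rw [this, Real.volume_Ico]
  norm_num

lemma volY_fiber (j : Fin d → ℤ) :
    volume ((fun y : Fin d → ℝ => fun i => ⌊y i⌋ + 1) ⁻¹' {j}) = 1 := by
  have : (fun y : Fin d → ℝ => fun i => ⌊y i⌋ + 1) ⁻¹' {j} =
      Set.pi Set.univ (fun i => Set.Ico ((j i : ℝ) - 1) (j i : ℝ)) := by
    ext y
    simp only [Set.mem_preimage, Set.mem_singleton_iff, Set.mem_pi, Set.mem_univ, true_implies,
      funext_iff]
    exact forall_congr' fun i => by rw [mem_Ico_iff_floor]
  rw [this, volume_pi_pi]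
  simp only [Real.volume_Ico]
  norm_num

def Rrow (d : ℕ) (q : ℝ) (f : ℝ × (Fin d → ℝ) → ℂ) (k : ℤ) : ℝ≥0∞ :=
  ∑' j : Fin d → ℤ, cellSup d f k j ^ q

def Sdisc (d : ℕ) (p q : ℝ) (f : ℝ × (Fin d → ℝ) → ℂ) : ℝ≥0∞ :=
  ∑' k : ℤ, (Rrow d q f k) ^ (p / q)

lemma lint_FF_q (q : ℝ) (f : ℝ × (Fin d → ℝ) → ℂ) (σ : ℤ × (Fin d → ℤ)) (x : ℝ) :
    ∫⁻ y : Fin d → ℝ, FF d f σ (x, y) ^ q = Rrow d q f (⌊x⌋ + 1 + σ.1) := by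
  have h1 : ∫⁻ y : Fin d → ℝ, FF d f σ (x, y) ^ q =
      ∑' j : Fin d → ℤ, cellSup d f (⌊x⌋ + 1 + σ.1) (fun i => j i + σ.2 i) ^ q :=
    lintegral_fiber measurable_floorY volY_fiber
      (fun j : Fin d → ℤ => cellSup d f (⌊x⌋ + 1 + σ.1) (fun i => j i + σ.2 i) ^ q)
  have h2 := Equiv.tsum_eq (Equiv.addRight σ.2)
    (fun j : Fin d → ℤ => cellSup d f (⌊x⌋ + 1 + σ.1) j ^ q)
  exact h1.trans h2

def AA (d : ℕ) (q : ℝ) (f : ℝ × (Fin d → ℝ) → ℂ) (x : ℝ) : ℝ≥0∞ :=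
  ∑ σ ∈ SH d, Rrow d q f (⌊x⌋ + 1 + σ.1)

lemma measurable_AA (q : ℝ) (f : ℝ × (Fin d → ℝ) → ℂ) : Measurable (AA d q f) := by
  have : AA d q f = fun x => (fun k : ℤ => ∑ σ ∈ SH d, Rrow d q f (k + σ.1))
      ((fun x : ℝ => ⌊x⌋ + 1) x) := rfl
  rw [this]
  exact (measurable_of_countable (fun k : ℤ => ∑ σ ∈ SH d, Rrow d q f (k + σ.1))).comp
    measurable_floorX

lemma lint_Dom (q : ℝ) (f : ℝ × (Fin d → ℝ) → ℂ) (x : ℝ) :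
    ∫⁻ y : Fin d → ℝ, Dom d q f (x, y) = AA d q f x := by
  have h1 : ∫⁻ y : Fin d → ℝ, ∑ σ ∈ SH d, FF d f σ (x, y) ^ q =
      ∑ σ ∈ SH d, ∫⁻ y : Fin d → ℝ, FF d f σ (x, y) ^ q :=
    lintegral_finset_sum _ fun σ _ =>
      ((measurable_FF f σ).comp measurable_prodMk_left).pow_const q
  exact h1.trans (Finset.sum_congr rfl fun σ _ => lint_FF_q q f σ x)

lemma lint_Rrow_rpow (pq q : ℝ) (f : ℝ × (Fin d → ℝ) → ℂ) (σ1 : ℤ) :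
    ∫⁻ x : ℝ, (Rrow d q f (⌊x⌋ + 1 + σ1)) ^ pq = ∑' k : ℤ, (Rrow d q f k) ^ pq := by
  have h1 : ∫⁻ x : ℝ, (Rrow d q f (⌊x⌋ + 1 + σ1)) ^ pq =
      ∑' k : ℤ, (Rrow d q f (k + σ1)) ^ pq :=
    lintegral_fiber measurable_floorX volX_fiber (fun k : ℤ => (Rrow d q f (k + σ1)) ^ pq)
  exact h1.trans (Equiv.tsum_eq (Equiv.addRight σ1) (fun k : ℤ => (Rrow d q f k) ^ pq))

lemma cellVol_unit (k : ℤ) (j : Fin d → ℤ) : cellVol (unitPart d) k j = 1 := by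
  unfold cellVol unitPart
  push_cast
  simp

lemma discNorm_unit (p q : ℝ) (f : ℝ × (Fin d → ℝ) → ℂ) :
    discNorm d p q (unitPart d) f = (Sdisc d p q f) ^ (1 / p) := by
  unfold discNorm Sdisc Rrow cellSup
  congr 1
  refine tsum_congr fun k => ?_
  congr 1
  refine tsum_congr fun j => ?_
  rw [cellVol_unit, ENNReal.ofReal_one, mul_one]

lemma Sdisc_lt_top {p q : ℝ} (hp : 0 < p) {f : ℝ × (Fin d → ℝ) → ℂ}
    (hf : MemLambda d p q f) : Sdisc d p q f < ⊤ := by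
  have h := hf.2 (unitPart d)
  rw [discNorm_unit] at h
  by_contra hc
  rw [not_lt, top_le_iff] at hc
  rw [hc, ENNReal.top_rpow_of_pos (by positivity)] at h
  exact absurd h (lt_irrefl _)

lemma sum_rpow_le {α : Type*} (s : Finset α) (F : α → ℝ≥0∞) {e : ℝ} (he : 0 ≤ e)
    (hs : s.Nonempty) :
    (∑ a ∈ s, F a) ^ e ≤ (s.card : ℝ≥0∞) ^ e * ∑ a ∈ s, F a ^ e := by
  have h1 : ∑ a ∈ s, F a ≤ (s.card : ℝ≥0∞) * s.sup F := by
    calc ∑ a ∈ s, F a ≤ s.card • s.sup F :=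
          Finset.sum_le_card_nsmul s F _ fun a ha => Finset.le_sup ha
      _ = (s.card : ℝ≥0∞) * s.sup F := by rw [nsmul_eq_mul]
  calc (∑ a ∈ s, F a) ^ e ≤ ((s.card : ℝ≥0∞) * s.sup F) ^ e := ENNReal.rpow_le_rpow h1 he
    _ = (s.card : ℝ≥0∞) ^ e * (s.sup F) ^ e := ENNReal.mul_rpow_of_nonneg _ _ he
    _ ≤ (s.card : ℝ≥0∞) ^ e * ∑ a ∈ s, F a ^ e :=
        mul_le_mul_right (sup_rpow_le_sum s F hs) _

lemma Itot_lt_top {p q : ℝ} (hp : 0 < p) (hpq : 0 ≤ p / q) {f : ℝ × (Fin d → ℝ) → ℂ}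
    (hf : MemLambda d p q f) :
    ∫⁻ x : ℝ, (AA d q f x) ^ (p / q) < ⊤ := by
  have hSne : (SH d).Nonempty := ⟨(0, 0), zero_mem_SH⟩
  have hb : ∀ x : ℝ, (AA d q f x) ^ (p / q) ≤
      ((SH d).card : ℝ≥0∞) ^ (p / q) * ∑ σ ∈ SH d, (Rrow d q f (⌊x⌋ + 1 + σ.1)) ^ (p / q) :=
    fun x => sum_rpow_le _ _ hpq hSne
  calc ∫⁻ x : ℝ, (AA d q f x) ^ (p / q)
      ≤ ∫⁻ x : ℝ, ((SH d).card : ℝ≥0∞) ^ (p / q) *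
          ∑ σ ∈ SH d, (Rrow d q f (⌊x⌋ + 1 + σ.1)) ^ (p / q) := lintegral_mono hb
    _ = ((SH d).card : ℝ≥0∞) ^ (p / q) *
          ∫⁻ x : ℝ, ∑ σ ∈ SH d, (Rrow d q f (⌊x⌋ + 1 + σ.1)) ^ (p / q) := lintegral_const_mul _
          (Finset.measurable_sum _ fun σ _ => by
            have : (fun x : ℝ => (Rrow d q f (⌊x⌋ + 1 + σ.1)) ^ (p/q)) = fun x =>
                (fun k : ℤ => (Rrow d q f (k + σ.1)) ^ (p/q)) ((fun x : ℝ => ⌊x⌋ + 1) x) := rfl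
            rw [this]
            exact (measurable_of_countable (fun k : ℤ => (Rrow d q f (k + σ.1)) ^ (p/q))).comp measurable_floorX)
    _ = ((SH d).card : ℝ≥0∞) ^ (p / q) * ∑ σ ∈ SH d, ∫⁻ x : ℝ,
          (Rrow d q f (⌊x⌋ + 1 + σ.1)) ^ (p / q) := by
        congr 1
        rw [lintegral_finset_sum _ fun σ _ => by
          have : (fun x : ℝ => (Rrow d q f (⌊x⌋ + 1 + σ.1)) ^ (p/q)) = fun x =>
              (fun k : ℤ => (Rrow d q f (k + σ.1)) ^ (p/q)) ((fun x : ℝ => ⌊x⌋ + 1) x) := rfl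
          rw [this]
          exact (measurable_of_countable (fun k : ℤ => (Rrow d q f (k + σ.1)) ^ (p/q))).comp measurable_floorX]
    _ = ((SH d).card : ℝ≥0∞) ^ (p / q) * ((SH d).card * Sdisc d p q f) := by
        congr 1
        rw [Finset.sum_congr rfl fun σ _ => lint_Rrow_rpow (p/q) q f σ.1]
        rw [Finset.sum_const, nsmul_eq_mul]
        rfl
    _ < ⊤ := by
        refine ENNReal.mul_lt_top ?_ (ENNReal.mul_lt_top (by simp) (Sdisc_lt_top hp hf))
        exact ENNReal.rpow_lt_top_of_nonneg hpq (by simp)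

/-! ### Lebesgue criterion: Riemann integrability implies a.e. continuity -/

section Lebesgue

open BoxIntegral

variable {N : ℕ}

def oscSet (g : (Fin N → ℝ) → ℂ) (J : Box (Fin N)) : Set ℝ :=
  (fun uv : ((Fin N → ℝ) × (Fin N → ℝ)) => ‖g uv.1 - g uv.2‖) '' (Box.Icc J ×ˢ Box.Icc J)

def oscC (g : (Fin N → ℝ) → ℂ) (J : Box (Fin N)) : ℝ := sSup (oscSet g J)

lemma box_Icc_nonempty (J : Box (Fin N)) : (Box.Icc J).Nonempty :=
  ⟨J.lower, Set.mem_Icc.2 ⟨le_refl _, J.lower_le_upper⟩⟩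

lemma oscSet_nonempty (g : (Fin N → ℝ) → ℂ) (J : Box (Fin N)) : (oscSet g J).Nonempty := by
  obtain ⟨w, hw⟩ := box_Icc_nonempty J
  exact ⟨‖g w - g w‖, ⟨(w, w), Set.mk_mem_prod hw hw, rfl⟩⟩

lemma oscSet_bddAbove {g : (Fin N → ℝ) → ℂ} {M : ℝ} (hM : ∀ v, ‖g v‖ ≤ M)
    (J : Box (Fin N)) : BddAbove (oscSet g J) := by
  refine ⟨2 * M, fun t ht => ?_⟩
  obtain ⟨⟨u, v⟩, _, rfl⟩ := ht
  calc ‖g u - g v‖ ≤ ‖g u‖ + ‖g v‖ := norm_sub_le _ _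
    _ ≤ 2 * M := by linarith [hM u, hM v]

lemma le_oscC {g : (Fin N → ℝ) → ℂ} {M : ℝ} (hM : ∀ v, ‖g v‖ ≤ M) {J : Box (Fin N)}
    {u v : Fin N → ℝ} (hu : u ∈ Box.Icc J) (hv : v ∈ Box.Icc J) :
    ‖g u - g v‖ ≤ oscC g J :=
  le_csSup (oscSet_bddAbove hM J) ⟨(u, v), Set.mk_mem_prod hu hv, rfl⟩

lemma oscC_nonneg {g : (Fin N → ℝ) → ℂ} {M : ℝ} (hM : ∀ v, ‖g v‖ ≤ M) (J : Box (Fin N)) :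
    0 ≤ oscC g J := by
  obtain ⟨w, hw⟩ := box_Icc_nonempty J
  have := le_oscC hM hw hw
  simpa using le_trans (norm_nonneg _) this

open Classical in
/-- retagging a tagged prepartition -/
def retag {I : Box (Fin N)} (π : TaggedPrepartition I) (t : Box (Fin N) → (Fin N → ℝ))
    (ht : ∀ J, t J ∈ Box.Icc J) : TaggedPrepartition I where
  toPrepartition := π.toPrepartition
  tag := fun J => if J ∈ π.boxes then t J else π.tag J
  tag_mem_Icc := fun J => by
    by_cases h : J ∈ π.boxes
    · simp only [h, if_true]
      exact Box.le_iff_Icc.1 (π.toPrepartition.le_of_mem h) (ht J)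
    · simp only [h, if_false]
      exact π.tag_mem_Icc J

lemma retag_isPartition {I : Box (Fin N)} {π : TaggedPrepartition I} (hπ : π.IsPartition)
    (t : Box (Fin N) → (Fin N → ℝ)) (ht : ∀ J, t J ∈ Box.Icc J) :
    (retag π t ht).IsPartition := hπ

lemma retag_memBaseSet {I : Box (Fin N)} {π : TaggedPrepartition I}
    {r : (Fin N → ℝ) → Set.Ioi (0 : ℝ)} (hrc : ∀ x, r x = r 0)
    (hH : π.IsHenstock)
    (hs : π.IsSubordinate fun _ => ⟨(r 0 : ℝ) / 2, by
      simp only [Set.mem_Ioi]; exact half_pos (r 0).2⟩)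
    (t : Box (Fin N) → (Fin N → ℝ)) (ht : ∀ J, t J ∈ Box.Icc J) {c : ℝ≥0} :
    IntegrationParams.Riemann.MemBaseSet I c r (retag π t ht) := by
  constructor
  · -- subordinate
    intro J hJ x hx
    have hJ' : J ∈ π.boxes := hJ
    have htag : (retag π t ht).tag J = t J := by
      simp only [retag]
      exact if_pos hJ'
    rw [htag, Metric.mem_closedBall]
    have h1 : dist x (π.tag J) ≤ (r 0 : ℝ) / 2 := hs J hJ' hx
    have h2 : dist (t J) (π.tag J) ≤ (r 0 : ℝ) / 2 := hs J hJ' (ht J)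
    have h3 : (r (t J) : ℝ) = (r 0 : ℝ) := by rw [hrc (t J)]
    calc dist x (t J) ≤ dist x (π.tag J) + dist (π.tag J) (t J) := dist_triangle _ _ _
      _ ≤ (r 0 : ℝ) / 2 + (r 0 : ℝ) / 2 := by
          rw [dist_comm (π.tag J)]; exact add_le_add h1 h2
      _ = (r 0 : ℝ) := by ring
      _ = (r (t J) : ℝ) := h3.symm
  · -- Henstock
    intro _ J hJ
    have hJ' : J ∈ π.boxes := hJ
    have htag : (retag π t ht).tag J = t J := by
      simp only [retag]
      exact if_pos hJ'
    rw [htag]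
    exact ht J
  · intro h; exact absurd h (by decide)
  · intro h; exact absurd h (by decide)

/-- sum of box oscillations is small for Riemann integrable functions -/
lemma osc_sum_small {I : Box (Fin N)} {g : (Fin N → ℝ) → ℂ} {M : ℝ} (hM : ∀ v, ‖g v‖ ≤ M)
    (hint : Integrable I IntegrationParams.Riemann g
      (volume : Measure (Fin N → ℝ)).toBoxAdditive.toSMul) :
    ∀ ε : ℝ, 0 < ε → ∃ π : TaggedPrepartition I, π.IsPartition ∧
      ∑ J ∈ π.boxes, oscC g J * (volume (J : Set (Fin N → ℝ))).toReal ≤ ε := by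
  intro ε hε
  set vol' := (volume : Measure (Fin N → ℝ)).toBoxAdditive.toSMul (E := ℂ) with hvol'
  obtain ⟨y, hy⟩ := hint
  set ε₁ : ℝ := ε / 8 with hε₁def
  have hε₁ : 0 < ε₁ := by positivity
  have hev := hy (Metric.closedBall_mem_nhds y hε₁)
  rw [Filter.mem_map, (IntegrationParams.Riemann.hasBasis_toFilteriUnion_top I).mem_iff] at hev
  obtain ⟨rr, hrr, hsubset⟩ := hev
  set r1 := rr 1 with hr1def
  have hr1c : ∀ x, r1 x = r1 0 := hrr 1 rfl
  obtain ⟨π₀, hp, hH, hs, -, -⟩ :=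
    Box.exists_taggedPartition_isHenstock_isSubordinate_homothetic I
      (fun _ => ⟨(r1 0 : ℝ) / 2, by simp only [Set.mem_Ioi]; exact half_pos (r1 0).2⟩)
  have hd : ∀ (t : Box (Fin N) → (Fin N → ℝ)) (ht : ∀ J, t J ∈ Box.Icc J),
      dist (integralSum g vol' (retag π₀ t ht)) y ≤ ε₁ := by
    intro t ht
    have hmem : retag π₀ t ht ∈ {π | ∃ c, IntegrationParams.Riemann.MemBaseSet I c (rr c) π ∧
        π.IsPartition} := ⟨1, retag_memBaseSet hr1c hH hs t ht, retag_isPartition hp t ht⟩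
    have := hsubset hmem
    simpa [Metric.mem_closedBall] using this
  -- total volume
  set V0 : ℝ := ∑ J ∈ π₀.boxes, (volume (J : Set (Fin N → ℝ))).toReal with hV0def
  have hV0 : 0 ≤ V0 := Finset.sum_nonneg fun J _ => ENNReal.toReal_nonneg
  set η : ℝ := ε / (8 * (V0 + 1)) with hηdef
  have hη : 0 < η := by positivity
  -- tag choices for the real and imaginary parts
  have key : ∀ φ : ℂ → ℝ, (∀ w, |φ w| ≤ ‖w‖) →
      (∀ (s : Finset (Box (Fin N))) (F : Box (Fin N) → ℂ),
        φ (∑ J ∈ s, F J) = ∑ J ∈ s, φ (F J)) →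
      (∀ (cc : ℝ) (w : ℂ), φ (cc • w) = cc * φ w) →
      (∀ a b : ℂ, φ (a - b) = φ a - φ b) →
      ∑ J ∈ π₀.boxes, (sSup ((fun v => φ (g v)) '' Box.Icc J) -
        sInf ((fun v => φ (g v)) '' Box.Icc J)) * (volume (J : Set (Fin N → ℝ))).toReal ≤
        2 * ε₁ + 2 * η * V0 := by
    intro φ hφ hφsums hφsmul hφsub
    have himg_ne : ∀ J : Box (Fin N), ((fun v => φ (g v)) '' Box.Icc J).Nonempty :=
      fun J => (box_Icc_nonempty J).image _
    have himg_bddA : ∀ J : Box (Fin N), BddAbove ((fun v => φ (g v)) '' Box.Icc J) := by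
      intro J
      refine ⟨M, ?_⟩
      rintro t ⟨w, -, rfl⟩
      exact le_trans (le_abs_self _) (le_trans (hφ (g w)) (hM w))
    have himg_bddB : ∀ J : Box (Fin N), BddBelow ((fun v => φ (g v)) '' Box.Icc J) := by
      intro J
      refine ⟨-M, ?_⟩
      rintro t ⟨w, -, rfl⟩
      have hh := le_trans (hφ (g w)) (hM w)
      rw [abs_le] at hh
      exact hh.1
    have hchP : ∀ J : Box (Fin N), ∃ u, u ∈ Box.Icc J ∧
        sSup ((fun v => φ (g v)) '' Box.Icc J) - η < φ (g u) := by
      intro J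
      obtain ⟨b, hb, hbgt⟩ := exists_lt_of_lt_csSup (himg_ne J)
        (show sSup ((fun v => φ (g v)) '' Box.Icc J) - η <
          sSup ((fun v => φ (g v)) '' Box.Icc J) by linarith)
      obtain ⟨u, hu, rfl⟩ := hb
      exact ⟨u, hu, hbgt⟩
    have hchM : ∀ J : Box (Fin N), ∃ u, u ∈ Box.Icc J ∧
        φ (g u) < sInf ((fun v => φ (g v)) '' Box.Icc J) + η := by
      intro J
      obtain ⟨b, hb, hblt⟩ := exists_lt_of_csInf_lt (himg_ne J)
        (show sInf ((fun v => φ (g v)) '' Box.Icc J) <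
          sInf ((fun v => φ (g v)) '' Box.Icc J) + η by linarith)
      obtain ⟨u, hu, rfl⟩ := hb
      exact ⟨u, hu, hblt⟩
    choose tp htp1 htp2 using hchP
    choose tm htm1 htm2 using hchM
    have hdP := hd tp htp1
    have hdM := hd tm htm1
    have hdiff : dist (integralSum g vol' (retag π₀ tp htp1))
        (integralSum g vol' (retag π₀ tm htm1)) ≤ 2 * ε₁ := by
      calc dist _ _ ≤ _ + _ := dist_triangle _ y _
        _ ≤ 2 * ε₁ := by rw [dist_comm y]; linarith
    have hsumdiff : integralSum g vol' (retag π₀ tp htp1) -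
        integralSum g vol' (retag π₀ tm htm1) =
        ∑ J ∈ π₀.boxes, ((volume (J : Set (Fin N → ℝ))).toReal : ℝ) • (g (tp J) - g (tm J)) := by
      unfold integralSum
      have hb1 : (retag π₀ tp htp1).boxes = π₀.boxes := rfl
      have hb2 : (retag π₀ tm htm1).boxes = π₀.boxes := rfl
      rw [hb1, hb2, ← Finset.sum_sub_distrib]
      refine Finset.sum_congr rfl fun J hJ => ?_
      have h1 : (retag π₀ tp htp1).tag J = tp J := if_pos hJ
      have h2 : (retag π₀ tm htm1).tag J = tm J := if_pos hJ
      have h3 : ∀ w : ℂ, vol' J w = (volume (J : Set (Fin N → ℝ))).toReal • w := by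
        intro w
        rw [hvol', BoxAdditiveMap.toSMul_apply, Measure.toBoxAdditive_apply]; rfl
      rw [h1, h2, h3, h3, smul_sub]
    have hφsum : φ (integralSum g vol' (retag π₀ tp htp1) -
        integralSum g vol' (retag π₀ tm htm1)) =
        ∑ J ∈ π₀.boxes, (volume (J : Set (Fin N → ℝ))).toReal * (φ (g (tp J)) - φ (g (tm J))) := by
      rw [hsumdiff, hφsums]
      refine Finset.sum_congr rfl fun J _ => ?_
      rw [hφsmul, hφsub]
    have hlb : ∑ J ∈ π₀.boxes, (sSup ((fun v => φ (g v)) '' Box.Icc J) -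
        sInf ((fun v => φ (g v)) '' Box.Icc J) - 2 * η) *
          (volume (J : Set (Fin N → ℝ))).toReal ≤
        ∑ J ∈ π₀.boxes, (volume (J : Set (Fin N → ℝ))).toReal *
          (φ (g (tp J)) - φ (g (tm J))) := by
      refine Finset.sum_le_sum fun J hJ => ?_
      rw [mul_comm]
      refine mul_le_mul_of_nonneg_left ?_ ENNReal.toReal_nonneg
      have := htp2 J
      have := htm2 J
      linarith
    have hub : ∑ J ∈ π₀.boxes, (volume (J : Set (Fin N → ℝ))).toReal *
        (φ (g (tp J)) - φ (g (tm J))) ≤ 2 * ε₁ := by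
      rw [← hφsum]
      calc φ _ ≤ |φ _| := le_abs_self _
        _ ≤ ‖_‖ := hφ _
        _ = dist (integralSum g vol' (retag π₀ tp htp1))
            (integralSum g vol' (retag π₀ tm htm1)) := (dist_eq_norm _ _).symm
        _ ≤ 2 * ε₁ := hdiff
    have hexp : ∑ J ∈ π₀.boxes, (sSup ((fun v => φ (g v)) '' Box.Icc J) -
        sInf ((fun v => φ (g v)) '' Box.Icc J) - 2 * η) *
          (volume (J : Set (Fin N → ℝ))).toReal =
        (∑ J ∈ π₀.boxes, (sSup ((fun v => φ (g v)) '' Box.Icc J) -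
        sInf ((fun v => φ (g v)) '' Box.Icc J)) *
          (volume (J : Set (Fin N → ℝ))).toReal) - 2 * η * V0 := by
      rw [hV0def, Finset.mul_sum, ← Finset.sum_sub_distrib]
      refine Finset.sum_congr rfl fun J hJ => by ring
    have := le_trans hlb hub
    rw [hexp] at this
    linarith
  -- apply to re and im
  have hre := key Complex.re (fun w => Complex.abs_re_le_norm w)
    (fun s F => Complex.re_sum s F) (fun cc w => Complex.smul_re cc w)
    (fun a b => Complex.sub_re a b)
  have him := key Complex.im (fun w => Complex.abs_im_le_norm w)
    (fun s F => Complex.im_sum s F) (fun cc w => Complex.smul_im cc w)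
    (fun a b => Complex.sub_im a b)
  refine ⟨π₀, hp, ?_⟩
  have hosc_le : ∀ J ∈ π₀.boxes, oscC g J ≤
      (sSup ((fun v => Complex.re (g v)) '' Box.Icc J) -
        sInf ((fun v => Complex.re (g v)) '' Box.Icc J)) +
      (sSup ((fun v => Complex.im (g v)) '' Box.Icc J) -
        sInf ((fun v => Complex.im (g v)) '' Box.Icc J)) := by
    intro J _
    refine csSup_le (oscSet_nonempty g J) ?_
    rintro t ⟨⟨u, v⟩, ⟨hu, hv⟩, rfl⟩
    have h1 : ‖g u - g v‖ ≤ |(g u - g v).re| + |(g u - g v).im| :=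
      Complex.norm_le_abs_re_add_abs_im _
    have hbddA : BddAbove ((fun v => Complex.re (g v)) '' Box.Icc J) := by
      refine ⟨M, ?_⟩; rintro t ⟨w, -, rfl⟩
      exact le_trans (le_abs_self _) (le_trans (Complex.abs_re_le_norm _) (hM w))
    have hbddB : BddBelow ((fun v => Complex.re (g v)) '' Box.Icc J) := by
      refine ⟨-M, ?_⟩; rintro t ⟨w, -, rfl⟩
      have h := le_trans (Complex.abs_re_le_norm (g w)) (hM w)
      rw [abs_le] at h; exact h.1
    have hbddA' : BddAbove ((fun v => Complex.im (g v)) '' Box.Icc J) := by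
      refine ⟨M, ?_⟩; rintro t ⟨w, -, rfl⟩
      exact le_trans (le_abs_self _) (le_trans (Complex.abs_im_le_norm _) (hM w))
    have hbddB' : BddBelow ((fun v => Complex.im (g v)) '' Box.Icc J) := by
      refine ⟨-M, ?_⟩; rintro t ⟨w, -, rfl⟩
      have h := le_trans (Complex.abs_im_le_norm (g w)) (hM w)
      rw [abs_le] at h; exact h.1
    have h2 : |(g u - g v).re| ≤ sSup ((fun v => Complex.re (g v)) '' Box.Icc J) -
        sInf ((fun v => Complex.re (g v)) '' Box.Icc J) := by
      rw [Complex.sub_re, abs_le]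
      constructor
      · have ha := le_csSup hbddA ⟨v, hv, rfl⟩
        have hb := csInf_le hbddB ⟨u, hu, rfl⟩
        linarith
      · have ha := le_csSup hbddA ⟨u, hu, rfl⟩
        have hb := csInf_le hbddB ⟨v, hv, rfl⟩
        linarith
    have h3 : |(g u - g v).im| ≤ sSup ((fun v => Complex.im (g v)) '' Box.Icc J) -
        sInf ((fun v => Complex.im (g v)) '' Box.Icc J) := by
      rw [Complex.sub_im, abs_le]
      constructor
      · have ha := le_csSup hbddA' ⟨v, hv, rfl⟩
        have hb := csInf_le hbddB' ⟨u, hu, rfl⟩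
        linarith
      · have ha := le_csSup hbddA' ⟨u, hu, rfl⟩
        have hb := csInf_le hbddB' ⟨v, hv, rfl⟩
        linarith
    linarith
  calc ∑ J ∈ π₀.boxes, oscC g J * (volume (J : Set (Fin N → ℝ))).toReal
      ≤ ∑ J ∈ π₀.boxes, ((sSup ((fun v => Complex.re (g v)) '' Box.Icc J) -
          sInf ((fun v => Complex.re (g v)) '' Box.Icc J)) +
        (sSup ((fun v => Complex.im (g v)) '' Box.Icc J) -
          sInf ((fun v => Complex.im (g v)) '' Box.Icc J))) *
            (volume (J : Set (Fin N → ℝ))).toReal := by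
        refine Finset.sum_le_sum fun J hJ => ?_
        exact mul_le_mul_of_nonneg_right (hosc_le J hJ) ENNReal.toReal_nonneg
    _ = (∑ J ∈ π₀.boxes, (sSup ((fun v => Complex.re (g v)) '' Box.Icc J) -
          sInf ((fun v => Complex.re (g v)) '' Box.Icc J)) *
            (volume (J : Set (Fin N → ℝ))).toReal) +
        ∑ J ∈ π₀.boxes, (sSup ((fun v => Complex.im (g v)) '' Box.Icc J) -
          sInf ((fun v => Complex.im (g v)) '' Box.Icc J)) *
            (volume (J : Set (Fin N → ℝ))).toReal := by
        rw [← Finset.sum_add_distrib]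
        exact Finset.sum_congr rfl fun J _ => by ring
    _ ≤ (2 * ε₁ + 2 * η * V0) + (2 * ε₁ + 2 * η * V0) := add_le_add hre him
    _ ≤ ε := by
        have hηV : η * V0 ≤ ε / 8 := by
          rw [hηdef]
          rw [div_mul_eq_mul_div, div_le_div_iff₀ (by positivity) (by norm_num)]
          nlinarith
        rw [hε₁def]
        linarith

lemma box_Ioo_open (J : Box (Fin N)) : IsOpen (Box.Ioo J) :=
  isOpen_set_pi Set.finite_univ fun _ _ => isOpen_Ioo

lemma measure_Icc_diff_Ioo (J : Box (Fin N)) :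
    volume (Box.Icc J \ Box.Ioo J) = 0 := by
  have h := BoxIntegral.Box.Ioo_ae_eq_Icc (I := J)
  exact ((MeasureTheory.ae_eq_set.1 h).2)

lemma measure_Ec {I : Box (Fin N)} {g : (Fin N → ℝ) → ℂ} {M : ℝ} (hM : ∀ v, ‖g v‖ ≤ M)
    (hint : Integrable I IntegrationParams.Riemann g
      (volume : Measure (Fin N → ℝ)).toBoxAdditive.toSMul)
    {c : ℝ} (hc : 0 < c) :
    volume ({z | ∀ δ > 0, ∃ u, dist u z < δ ∧ c ≤ dist (g u) (g z)} ∩ (I : Set (Fin N → ℝ)))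
      = 0 := by
  set E : Set (Fin N → ℝ) := {z | ∀ δ > 0, ∃ u, dist u z < δ ∧ c ≤ dist (g u) (g z)} with hE
  have key : ∀ ε : ℝ, 0 < ε → volume (E ∩ (I : Set (Fin N → ℝ))) ≤ ENNReal.ofReal ε := by
    intro ε hε
    obtain ⟨π, hpart, hosc⟩ := osc_sum_small hM hint (c * ε) (by positivity)
    set Fb : Finset (Box (Fin N)) := π.boxes.filter (fun J => c ≤ oscC g J) with hFb
    have hcover : E ∩ (I : Set (Fin N → ℝ)) ⊆
        (⋃ J ∈ Fb, Box.Icc J) ∪ (⋃ J ∈ π.boxes, (Box.Icc J \ Box.Ioo J)) := by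
      rintro z ⟨hzE, hzI⟩
      obtain ⟨J, hJ, hzJ⟩ := hpart z hzI
      by_cases hIoo : z ∈ Box.Ioo J
      · left
        have hJF : J ∈ Fb := by
          rw [hFb]
          refine Finset.mem_filter.2 ⟨hJ, ?_⟩
          obtain ⟨δ, hδ, hball⟩ := Metric.isOpen_iff.1 (box_Ioo_open J) z hIoo
          obtain ⟨u, hu1, hu2⟩ := hzE δ hδ
          have huIcc : u ∈ Box.Icc J := J.Ioo_subset_Icc (hball (Metric.mem_ball.2 hu1))
          have hzIcc : z ∈ Box.Icc J := J.Ioo_subset_Icc hIoo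
          calc c ≤ dist (g u) (g z) := hu2
            _ = ‖g u - g z‖ := dist_eq_norm _ _
            _ ≤ oscC g J := le_oscC hM huIcc hzIcc
        exact Set.mem_iUnion₂.2 ⟨J, hJF, Box.coe_subset_Icc hzJ⟩
      · right
        exact Set.mem_iUnion₂.2 ⟨J, hJ, ⟨Box.coe_subset_Icc hzJ, hIoo⟩⟩
    calc volume (E ∩ (I : Set (Fin N → ℝ)))
        ≤ volume ((⋃ J ∈ Fb, Box.Icc J) ∪ (⋃ J ∈ π.boxes, (Box.Icc J \ Box.Ioo J))) :=
          measure_mono hcover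
      _ ≤ volume (⋃ J ∈ Fb, Box.Icc J) + volume (⋃ J ∈ π.boxes, (Box.Icc J \ Box.Ioo J)) :=
          measure_union_le _ _
      _ ≤ (∑ J ∈ Fb, volume (Box.Icc J)) + ∑ J ∈ π.boxes, volume (Box.Icc J \ Box.Ioo J) :=
          add_le_add (measure_biUnion_finset_le _ _) (measure_biUnion_finset_le _ _)
      _ = ∑ J ∈ Fb, volume (Box.Icc J) := by
          rw [Finset.sum_congr rfl fun J _ => measure_Icc_diff_Ioo J]
          simp
      _ = ∑ J ∈ Fb, ENNReal.ofReal ((volume (J : Set (Fin N → ℝ))).toReal) := by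
          refine Finset.sum_congr rfl fun J _ => ?_
          rw [← measure_congr (BoxIntegral.Box.coe_ae_eq_Icc (I := J)),
            ENNReal.ofReal_toReal (J.measure_coe_lt_top volume).ne]
      _ = ENNReal.ofReal (∑ J ∈ Fb, (volume (J : Set (Fin N → ℝ))).toReal) :=
          (ENNReal.ofReal_sum_of_nonneg fun J _ => ENNReal.toReal_nonneg).symm
      _ ≤ ENNReal.ofReal ε := by
          refine ENNReal.ofReal_le_ofReal ?_
          have h1 : c * ∑ J ∈ Fb, (volume (J : Set (Fin N → ℝ))).toReal ≤
              ∑ J ∈ Fb, oscC g J * (volume (J : Set (Fin N → ℝ))).toReal := by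
            rw [Finset.mul_sum]
            refine Finset.sum_le_sum fun J hJ => ?_
            rw [hFb, Finset.mem_filter] at hJ
            exact mul_le_mul_of_nonneg_right hJ.2 ENNReal.toReal_nonneg
          have h2 : ∑ J ∈ Fb, oscC g J * (volume (J : Set (Fin N → ℝ))).toReal ≤
              ∑ J ∈ π.boxes, oscC g J * (volume (J : Set (Fin N → ℝ))).toReal := by
            refine Finset.sum_le_sum_of_subset_of_nonneg (Finset.filter_subset _ _) ?_
            intro J _ _
            exact mul_nonneg (oscC_nonneg hM J) ENNReal.toReal_nonneg
          have := le_trans h1 (le_trans h2 hosc)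
          calc ∑ J ∈ Fb, (volume (J : Set (Fin N → ℝ))).toReal
              ≤ c * ε / c := by rw [le_div_iff₀ hc]; linarith [this]
            _ = ε := by field_simp
  by_contra h0
  rcases eq_or_ne (volume (E ∩ (I : Set (Fin N → ℝ)))) ⊤ with htop | htop
  · have := key 1 one_pos
    rw [htop] at this
    exact absurd (lt_of_le_of_lt this (by simp [ENNReal.ofReal_lt_top])) (lt_irrefl _)
  · have hpos : 0 < (volume (E ∩ (I : Set (Fin N → ℝ)))).toReal := by
      refine ENNReal.toReal_pos h0 htop
    have := key ((volume (E ∩ (I : Set (Fin N → ℝ)))).toReal / 2) (by positivity)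
    have hlt : ENNReal.ofReal ((volume (E ∩ (I : Set (Fin N → ℝ)))).toReal / 2) <
        volume (E ∩ (I : Set (Fin N → ℝ))) := by
      exact lt_of_lt_of_le ((ENNReal.ofReal_lt_ofReal_iff hpos).2 (by linarith))
        (le_of_eq (ENNReal.ofReal_toReal htop))
    exact absurd (lt_of_le_of_lt this hlt) (lt_irrefl _)

lemma discont_null {g : (Fin N → ℝ) → ℂ} {M : ℝ} (hM : ∀ v, ‖g v‖ ≤ M)
    (B : ℕ → Box (Fin N))
    (hint : ∀ m, Integrable (B m) IntegrationParams.Riemann g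
      (volume : Measure (Fin N → ℝ)).toBoxAdditive.toSMul)
    (hcov : ∀ z : Fin N → ℝ, ∃ m, z ∈ (B m : Set (Fin N → ℝ))) :
    volume {v : Fin N → ℝ | ¬ ContinuousAt g v} = 0 := by
  have hsub : {v : Fin N → ℝ | ¬ ContinuousAt g v} ⊆
      ⋃ (m : ℕ) (k : ℕ),
        ({z | ∀ δ > 0, ∃ u, dist u z < δ ∧ 1 / ((k : ℝ) + 1) ≤ dist (g u) (g z)} ∩
          (B m : Set (Fin N → ℝ))) := by
    intro z hz
    rw [Set.mem_setOf_eq, Metric.continuousAt_iff] at hz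
    push_neg at hz
    obtain ⟨ε₀, hε₀, hzp⟩ := hz
    obtain ⟨k, hk⟩ := exists_nat_one_div_lt hε₀
    obtain ⟨m, hm⟩ := hcov z
    refine Set.mem_iUnion.2 ⟨m, Set.mem_iUnion.2 ⟨k, ⟨?_, hm⟩⟩⟩
    intro δ hδ
    obtain ⟨u, hu1, hu2⟩ := hzp δ hδ
    exact ⟨u, hu1, le_trans hk.le hu2⟩
  refine measure_mono_null hsub ?_
  refine measure_iUnion_null fun m => measure_iUnion_null fun k => ?_
  exact measure_Ec hM (hint m) (by positivity)

end Lebesgue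

lemma continuous_cons : Continuous (fun z : ℝ × (Fin d → ℝ) => (Fin.cons z.1 z.2 : Fin (d+1) → ℝ)) := by
  refine continuous_pi fun j => ?_
  induction j using Fin.cases with
  | zero => simpa using continuous_fst
  | succ i => simpa [Function.comp_def] using (continuous_apply i).comp continuous_snd

lemma measurePreserving_cons :
    MeasurePreserving (fun z : ℝ × (Fin d → ℝ) => (Fin.cons z.1 z.2 : Fin (d+1) → ℝ))
      volume volume := by
  have h := (MeasureTheory.volume_preserving_piFinSuccAbove (fun _ : Fin (d+1) => ℝ) 0).symm
  convert h using 1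
  · rfl
  · rfl
  ext z
  simp [MeasurableEquiv.piFinSuccAbove, Fin.insertNthEquiv]

lemma discont_null_E {f : ℝ × (Fin d → ℝ) → ℂ} {M : ℝ} (hM : ∀ z, ‖f z‖ ≤ M)
    (hloc : ∀ (a b : ℝ) (c dd : Fin d → ℝ) (hab : a < b) (hcd : ∀ i, c i < dd i),
      RiemannIntegrableOn d f a b c dd hab hcd) :
    volume {z : ℝ × (Fin d → ℝ) | ¬ ContinuousAt f z} = 0 := by
  set g : (Fin (d+1) → ℝ) → ℂ := fun v => f (v 0, fun i => v i.succ) with hgdef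
  set B : ℕ → BoxIntegral.Box (Fin (d+1)) := fun m =>
    ⟨Fin.cons (-((m:ℝ)+1)) (fun _ => -((m:ℝ)+1)), Fin.cons ((m:ℝ)+1) (fun _ => (m:ℝ)+1), by
      intro i
      induction i using Fin.cases with
      | zero =>
          exact show (-((m:ℝ)+1) : ℝ) < (m:ℝ)+1 by linarith [Nat.cast_nonneg (α := ℝ) m]
      | succ j =>
          exact show (-((m:ℝ)+1) : ℝ) < (m:ℝ)+1 by linarith [Nat.cast_nonneg (α := ℝ) m]⟩
    with hBdef
  have hint : ∀ m, BoxIntegral.Integrable (B m) BoxIntegral.IntegrationParams.Riemann g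
      (volume : Measure (Fin (d+1) → ℝ)).toBoxAdditive.toSMul := by
    intro m
    exact hloc (-((m:ℝ)+1)) ((m:ℝ)+1) (fun _ => -((m:ℝ)+1)) (fun _ => (m:ℝ)+1)
      (show (-((m:ℝ)+1) : ℝ) < (m:ℝ)+1 by linarith [Nat.cast_nonneg (α := ℝ) m])
      (fun i => show (-((m:ℝ)+1) : ℝ) < (m:ℝ)+1 by linarith [Nat.cast_nonneg (α := ℝ) m])
  have hcov : ∀ z : Fin (d+1) → ℝ, ∃ m, z ∈ (B m : Set (Fin (d+1) → ℝ)) := by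
    intro z
    obtain ⟨m, hm⟩ := exists_nat_gt (Finset.univ.sup' ⟨0, Finset.mem_univ 0⟩ fun i => |z i|)
    have hzi : ∀ i, |z i| < m := fun i =>
      lt_of_le_of_lt (Finset.le_sup' (fun i => |z i|) (Finset.mem_univ i)) hm
    refine ⟨m, ?_⟩
    have : ∀ i, (B m).lower i < z i ∧ z i ≤ (B m).upper i := by
      intro i
      have h := abs_lt.1 (hzi i)
      induction i using Fin.cases with
      | zero => simp only [hBdef, Fin.cons_zero]; constructor <;> linarith
      | succ j => simp only [hBdef, Fin.cons_succ]; constructor <;> linarith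
    exact fun i => Set.mem_Ioc.2 (this i)
  have hDg : volume {v : Fin (d+1) → ℝ | ¬ ContinuousAt g v} = 0 :=
    discont_null (fun v => hM _) B hint hcov
  have hmeasg : MeasurableSet {v : Fin (d+1) → ℝ | ¬ ContinuousAt g v} := by
    have h := (IsGδ.setOf_continuousAt g).measurableSet
    have : {v : Fin (d+1) → ℝ | ¬ ContinuousAt g v} = {v | ContinuousAt g v}ᶜ := rfl
    rw [this]
    exact h.compl
  have hsub : {z : ℝ × (Fin d → ℝ) | ¬ ContinuousAt f z} ⊆
      (fun z : ℝ × (Fin d → ℝ) => (Fin.cons z.1 z.2 : Fin (d+1) → ℝ)) ⁻¹'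
        {v : Fin (d+1) → ℝ | ¬ ContinuousAt g v} := by
    intro z hz
    simp only [Set.mem_preimage, Set.mem_setOf_eq] at hz ⊢
    intro hg
    refine hz ?_
    have hf : f = g ∘ (fun z : ℝ × (Fin d → ℝ) => (Fin.cons z.1 z.2 : Fin (d+1) → ℝ)) := by
      funext w
      simp [hgdef, Fin.cons_zero, Fin.cons_succ]
    rw [hf]
    exact ContinuousAt.comp (x := z) hg continuous_cons.continuousAt
  refine measure_mono_null hsub ?_
  rw [measurePreserving_cons.measure_preimage hmeasg.nullMeasurableSet]
  exact hDg

lemma tendsto_rpow_zero' {e : ℝ} (he : 1 ≤ e) {u : ℕ → ℝ≥0∞}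
    (h : Tendsto u atTop (𝓝 0)) : Tendsto (fun n => (u n) ^ e) atTop (𝓝 0) := by
  rw [ENNReal.tendsto_nhds_zero] at h ⊢
  intro ε hε
  filter_upwards [h (min 1 ε) (lt_min one_pos hε)] with n hn
  calc (u n) ^ e ≤ (u n) ^ (1:ℝ) :=
      ENNReal.rpow_le_rpow_of_exponent_ge (le_trans hn (min_le_left _ _)) he
    _ = u n := ENNReal.rpow_one _
    _ ≤ ε := le_trans hn (min_le_right _ _)

end TauAux

open TauAux

/-- if `f ∈ Λ^{p,q}` (with `1 ≤ q ≤ p < ∞`) is bounded and locally Riemann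
integrable on `ℝ × ℝ^d`, then `lim_{δ→0⁺} τ_r(f;δ;ℝ×ℝ^d)_{p,q} = 0`. -/
theorem tendsto_tauMod_zero_of_locRiemann
    (d : ℕ) (hd : 1 ≤ d) (p q : ℝ) (hq : 1 ≤ q) (hqp : q ≤ p) (r : ℕ) (hr : 1 ≤ r)
    (f : ℝ × (Fin d → ℝ) → ℂ) (hf : MemLambda d p q f)
    (hbdd : ∃ M : ℝ, ∀ z, ‖f z‖ ≤ M)
    (hloc : ∀ (a b : ℝ) (c dd : Fin d → ℝ) (hab : a < b) (hcd : ∀ i, c i < dd i),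
      RiemannIntegrableOn d f a b c dd hab hcd) :
    Tendsto (fun δ : ℝ => tauModC d r p q f δ) (nhdsWithin 0 (Set.Ioi 0)) (nhds 0) := by
  classical
  obtain ⟨M, hM⟩ := hbdd
  have hq0 : (0:ℝ) < q := lt_of_lt_of_le one_pos hq
  have hp0 : (0:ℝ) < p := lt_of_lt_of_le hq0 hqp
  have hpq1 : (1:ℝ) ≤ p / q := (one_le_div hq0).2 hqp
  have hpq0 : (0:ℝ) < p / q := by positivity
  -- a.e. continuity, sliced
  have hD := discont_null_E hM hloc
  have hDprod : ∀ᵐ x : ℝ, ∀ᵐ y : Fin d → ℝ, ContinuousAt f (x, y) := by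
    rw [MeasureTheory.Measure.volume_eq_prod ℝ (Fin d → ℝ)] at hD
    have h2 := MeasureTheory.Measure.measure_ae_null_of_prod_null hD
    filter_upwards [h2] with x hx
    simp only [Pi.zero_apply] at hx
    have h3 := measure_eq_zero_iff_ae_notMem.1 hx
    filter_upwards [h3] with y hy
    simp only [Set.mem_preimage, Set.mem_setOf_eq, not_not] at hy
    exact hy
  -- dominating function facts
  have hItot := Itot_lt_top (d := d) hp0 hpq0.le hf
  have hAAfin : ∀ᵐ x : ℝ, AA d q f x < ⊤ := by
    have h := ae_lt_top ((measurable_AA q f).pow_const (p/q)) hItot.ne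
    filter_upwards [h] with x hx
    by_contra hc
    push_neg at hc
    rw [top_le_iff.1 hc, ENNReal.top_rpow_of_pos hpq0] at hx
    exact absurd hx (lt_irrefl _)
  set KK : ℝ≥0∞ := ((2:ℝ≥0∞) ^ (r + 1)) ^ q with hKKdef
  have hKKne : KK ≠ ⊤ := by
    refine ENNReal.rpow_ne_top_of_nonneg hq0.le ?_
    exact (ENNReal.pow_ne_top (by simp))
  set T : ℕ → ℝ≥0∞ := fun n =>
    ∫⁻ x : ℝ, (∫⁻ y : Fin d → ℝ, (((2:ℝ≥0∞)^r) * OscN d (n+2) f (x,y)) ^ q) ^ (p/q) with hTdef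
  have hTmeas_inner : ∀ n, Measurable
      (fun z : ℝ × (Fin d → ℝ) => (((2:ℝ≥0∞)^r) * OscN d (n+2) f z) ^ q) :=
    fun n => ((measurable_OscN _ f).const_mul _).pow_const _
  set G : ℕ → ℝ → ℝ≥0∞ := fun n x =>
    ∫⁻ y : Fin d → ℝ, (((2:ℝ≥0∞)^r) * OscN d (n+2) f (x,y)) ^ q with hGdef
  have hGmeas : ∀ n, Measurable (G n) := fun n => (hTmeas_inner n).lintegral_prod_right'
  have hDomfin : ∀ x : ℝ, ∫⁻ y, KK * Dom d q f (x, y) = KK * AA d q f x := by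
    intro x
    have h1 : ∫⁻ y : Fin d → ℝ, KK * Dom d q f (x, y) =
        KK * ∫⁻ y : Fin d → ℝ, Dom d q f (x, y) :=
      lintegral_const_mul KK ((measurable_Dom q f).comp measurable_prodMk_left)
    rw [h1, lint_Dom]
  have hGbound : ∀ n (x : ℝ), G n x ≤ KK * AA d q f x := by
    intro n x
    calc G n x ≤ ∫⁻ y, KK * Dom d q f (x, y) :=
        lintegral_mono fun y => pow_OscN_le_Dom (by omega) hq0.le f (x,y)
      _ = KK * AA d q f x := hDomfin x
  have hGtend : ∀ᵐ x : ℝ, Tendsto (fun n => G n x) atTop (𝓝 0) := by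
    filter_upwards [hDprod, hAAfin] with x hx hfin
    have h := tendsto_lintegral_of_dominated_convergence
      (F := fun n (y : Fin d → ℝ) => (((2:ℝ≥0∞)^r) * OscN d (n+2) f (x,y)) ^ q)
      (bound := fun y => KK * Dom d q f (x, y)) (f := fun _ => (0:ℝ≥0∞))
      (fun n => (hTmeas_inner n).comp measurable_prodMk_left)
      (fun n => ae_of_all _ fun y => pow_OscN_le_Dom (by omega) hq0.le f (x,y))
      (by rw [hDomfin x]; exact ENNReal.mul_ne_top hKKne hfin.ne)
      (by
        filter_upwards [hx] with y hy
        have h1 : Tendsto (fun n => ((2:ℝ≥0∞)^r) * OscN d (n+2) f (x,y)) atTop (𝓝 0) := by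
          have := ENNReal.Tendsto.const_mul (a := (2:ℝ≥0∞)^r) (tendsto_OscN hy)
            (Or.inr (ENNReal.pow_ne_top (by simp : (2:ℝ≥0∞) ≠ ⊤)))
          simpa using this
        exact tendsto_rpow_zero' hq h1)
    simpa using h
  have hTtend : Tendsto T atTop (𝓝 0) := by
    have h := tendsto_lintegral_of_dominated_convergence
      (F := fun n (x : ℝ) => (G n x) ^ (p/q))
      (bound := fun x => KK ^ (p/q) * (AA d q f x) ^ (p/q)) (f := fun _ => (0:ℝ≥0∞))
      (fun n => (hGmeas n).pow_const _)
      (fun n => ae_of_all _ fun x => by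
        calc (G n x) ^ (p/q) ≤ (KK * AA d q f x) ^ (p/q) :=
            ENNReal.rpow_le_rpow (hGbound n x) hpq0.le
          _ = KK ^ (p/q) * (AA d q f x) ^ (p/q) := ENNReal.mul_rpow_of_nonneg _ _ hpq0.le)
      (by
        rw [lintegral_const_mul _ ((measurable_AA q f).pow_const (p/q))]
        exact ENNReal.mul_ne_top (ENNReal.rpow_ne_top_of_nonneg hpq0.le hKKne) hItot.ne)
      (by
        filter_upwards [hGtend] with x hx
        exact tendsto_rpow_zero' hpq1 hx)
    simpa using h
  -- conclusion
  rw [ENNReal.tendsto_nhds_zero]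
  intro ε hε
  have hεp : (0:ℝ≥0∞) < ε ^ p := by
    rcases eq_or_ne ε ⊤ with rfl | hne
    · rw [ENNReal.top_rpow_of_pos hp0]; simp
    · exact ENNReal.rpow_pos hε hne
  obtain ⟨n, hn⟩ := (hTtend.eventually_lt_const hεp).exists
  set δ0 : ℝ := 2 / ((r:ℝ) * ((n:ℝ)+2)) with hδ0def
  have hr0 : (0:ℝ) < r := by exact_mod_cast hr
  have hδ0pos : 0 < δ0 := by positivity
  filter_upwards [Ioc_mem_nhdsGT_of_mem ⟨le_refl (0:ℝ), hδ0pos⟩] with δ hδmem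
  obtain ⟨hδpos, hδle⟩ := hδmem
  have hδsmall : (r:ℝ) * δ / 2 ≤ 1 / ((n:ℝ)+2) := by
    rw [hδ0def, le_div_iff₀ (by positivity)] at hδle
    rw [div_le_div_iff₀ (by norm_num) (by positivity)]
    nlinarith
  have hcast : ((n + 2 : ℕ) : ℝ) = (n:ℝ) + 2 := by push_cast; ring
  have hpt : ∀ z : ℝ × (Fin d → ℝ), locModC d r f δ z ≤ ((2:ℝ≥0∞)^r) * OscN d (n+2) f z := by
    intro z
    refine locModC_le_OscN hr (by omega) f ?_ z
    rw [hcast]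
    exact hδsmall
  calc tauModC d r p q f δ
      ≤ (T n) ^ (1/p) := by
        refine ENNReal.rpow_le_rpow ?_ (by positivity)
        refine lintegral_mono fun x => ?_
        refine ENNReal.rpow_le_rpow ?_ hpq0.le
        refine lintegral_mono fun y => ?_
        exact ENNReal.rpow_le_rpow (hpt (x,y)) hq0.le
    _ ≤ (ε ^ p) ^ (1/p) := ENNReal.rpow_le_rpow hn.le (by positivity)
    _ = ε := by
        rw [← ENNReal.rpow_mul, mul_one_div, div_self hp0.ne', ENNReal.rpow_one]
end
end

section
/- Let d ∈ ℕ, d ≥ 1, 1 ≤ p ≤ q < ∞, r ∈ ℕ and h > 0. If f ∈ Λ^{p,q}, then the Steklov mean F_{r,h} also belongs to Λ^{p,q}. -/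
open MeasureTheory Filter Set Asymptotics
open scoped ENNReal NNReal

noncomputable section

/-- The Steklov mean `F_{r,h}` of `f : ℝ × ℝ^d → ℂ`:
`F_{r,h}(x,y) = h^{-r(d+1)} ∫_{[0,h]^r} ∫_{([0,h]^d)^r} f(x + ∑ uᵢ, y + ∑ vᵢ) dv du`. -/
def steklov (d r : ℕ) (h : ℝ) (f : ℝ × (Fin d → ℝ) → ℂ) (z : ℝ × (Fin d → ℝ)) : ℂ :=
  (h ^ (r * (d + 1)))⁻¹ •
    ∫ u in Set.univ.pi (fun _ : Fin r => Set.Icc (0 : ℝ) h),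
      ∫ v in Set.univ.pi (fun _ : Fin r => Set.univ.pi fun _ : Fin d => Set.Icc (0 : ℝ) h),
        f (z.1 + ∑ i, u i, fun t => z.2 t + ∑ i, v i t)

private lemma seq_growth (y : ℤ → ℝ) (Δ : ℝ) (hg : ∀ m : ℤ, Δ ≤ y m - y (m - 1)) (k : ℤ) :
    ∀ m : ℤ, 0 ≤ m → y k + m * Δ ≤ y (k + m) := by
  refine Int.le_induction ?_ ?_
  · simp
  · intro n hn ih
    have h2 := hg (k + n + 1)
    rw [show k + n + 1 - 1 = k + n by ring] at h2
    rw [show k + (n + 1) = k + n + 1 by ring]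
    push_cast
    linarith

private lemma oneD (y : ℤ → ℝ) (Δ : ℝ)
    (hg : ∀ m : ℤ, Δ ≤ y m - y (m - 1)) (M : ℤ) (hM : 0 ≤ M)
    (k : ℤ) (w : ℝ) (h1 : y (k - 1) ≤ w) (h2 : w < y k + M * Δ) :
    ∃ τ : ℤ, τ ∈ Finset.Icc 0 M ∧ y (k + τ - 1) ≤ w ∧ w < y (k + τ) := by
  have hkM : w < y (k + M) := lt_of_lt_of_le h2 (seq_growth y Δ hg k M hM)
  set T := (Finset.Icc 0 M).filter (fun τ => w < y (k + τ)) with hT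
  have hne : T.Nonempty := ⟨M, by simp [hT, hM, hkM]⟩
  have hτ0T : T.min' hne ∈ T := T.min'_mem hne
  set τ0 := T.min' hne
  obtain ⟨hmem, hlt⟩ := Finset.mem_filter.mp hτ0T
  refine ⟨τ0, hmem, ?_, hlt⟩
  rcases eq_or_lt_of_le ((Finset.mem_Icc.mp hmem).1) with h0 | h0
  · rw [show k + τ0 - 1 = k - 1 by omega]
    exact h1
  · have hmem' : τ0 - 1 ∈ Finset.Icc 0 M := by
      rw [Finset.mem_Icc] at hmem ⊢; omega
    have hnotin : τ0 - 1 ∉ T := fun hc => absurd (T.min'_le _ hc) (by omega)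
    have := by simpa [hT, hmem'] using hnotin
    rwa [show k + τ0 - 1 = k + (τ0 - 1) by ring]

private lemma rpow_finset_sum_le {ι : Type*} [DecidableEq ι] (s : Finset ι) (g : ι → ℝ≥0∞) {e : ℝ}
    (h0 : 0 < e) (h1 : e ≤ 1) : (∑ i ∈ s, g i) ^ e ≤ ∑ i ∈ s, g i ^ e := by
  induction s using Finset.induction with
  | empty => simp [ENNReal.zero_rpow_of_pos h0]
  | insert _ _ hx ih =>
    rw [Finset.sum_insert hx, Finset.sum_insert hx]
    exact (ENNReal.rpow_add_le_add_rpow _ _ h0.le h1).trans (add_le_add_right ih _)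

/-- The supremum of `‖f‖` over a cell, as used in `discNorm`. -/
private def cellSup {d : ℕ} (P : AdmissiblePartition d) (f : ℝ × (Fin d → ℝ) → ℂ)
    (k : ℤ) (j : Fin d → ℤ) : ℝ≥0∞ :=
  ⨆ z ∈ cell P k j, ENNReal.ofReal ‖f z‖

/-- The inner sum over `j` in `discNorm`. -/
private def rowSum {d : ℕ} (P : AdmissiblePartition d) (f : ℝ × (Fin d → ℝ) → ℂ)
    (q : ℝ) (k : ℤ) : ℝ≥0∞ :=
  ∑' j : Fin d → ℤ, cellSup P f k j ^ q * ENNReal.ofReal (cellVol P k j)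

private lemma discNorm_eq {d : ℕ} (p q : ℝ) (P : AdmissiblePartition d)
    (f : ℝ × (Fin d → ℝ) → ℂ) :
    discNorm d p q P f = (∑' k : ℤ, rowSum P f q k ^ (p / q)) ^ (1 / p) := rfl

private lemma cellVol_ratio {d : ℕ} (P : AdmissiblePartition d) (k k' : ℤ)
    (j j' : Fin d → ℤ) :
    ENNReal.ofReal (cellVol P k j) ≤
      ENNReal.ofReal ((P.Δhi / P.Δlo) ^ (d + 1)) * ENNReal.ofReal (cellVol P k' j') := by
  have hlo : 0 < P.Δlo := P.Δlo_pos
  have hhi : P.Δlo ≤ P.Δhi := le_trans (P.xgap_lo 0) (P.xgap_hi 0)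
  have hrat : 0 ≤ (P.Δhi / P.Δlo) ^ (d + 1) := pow_nonneg (div_nonneg (hlo.le.trans hhi) hlo.le) _
  rw [← ENNReal.ofReal_mul hrat]
  apply ENNReal.ofReal_le_ofReal
  have h1 : cellVol P k j ≤ P.Δhi ^ (d + 1) := by
    unfold cellVol
    calc (P.x k - P.x (k - 1)) * ∏ i, (P.y i (j i) - P.y i (j i - 1))
        ≤ P.Δhi * ∏ _i : Fin d, P.Δhi := by
          apply mul_le_mul (P.xgap_hi k)
          · exact Finset.prod_le_prod (fun i _ => hlo.le.trans (P.ygap_lo i (j i)))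
              (fun i _ => P.ygap_hi i (j i))
          · exact Finset.prod_nonneg fun i _ => hlo.le.trans (P.ygap_lo i (j i))
          · exact hlo.le.trans hhi
      _ = P.Δhi ^ (d + 1) := by
          rw [Finset.prod_const, Finset.card_univ, Fintype.card_fin, pow_succ, mul_comm]
  have h2 : P.Δlo ^ (d + 1) ≤ cellVol P k' j' := by
    unfold cellVol
    calc P.Δlo ^ (d + 1) = P.Δlo * ∏ _i : Fin d, P.Δlo := by
          rw [Finset.prod_const, Finset.card_univ, Fintype.card_fin, pow_succ, mul_comm]
      _ ≤ _ := by
          apply mul_le_mul (P.xgap_lo k')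
          · exact Finset.prod_le_prod (fun _ _ => hlo.le) (fun i _ => P.ygap_lo i (j' i))
          · exact Finset.prod_nonneg fun _ _ => hlo.le
          · exact hlo.le.trans (P.xgap_lo k')
  calc cellVol P k j ≤ P.Δhi ^ (d + 1) := h1
    _ = (P.Δhi / P.Δlo) ^ (d + 1) * P.Δlo ^ (d + 1) := by
        rw [div_pow, div_mul_cancel₀ _ (pow_ne_zero _ hlo.ne')]
    _ ≤ (P.Δhi / P.Δlo) ^ (d + 1) * cellVol P k' j' :=
        mul_le_mul_of_nonneg_left h2 hrat
private lemma steklov_pointwise {d r : ℕ} {h : ℝ} (hh : 0 < h)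
    (f : ℝ × (Fin d → ℝ) → ℂ) (P : AdmissiblePartition d)
    (M : ℤ) (hM0 : 0 ≤ M) (hMh : (r : ℝ) * h ≤ (M : ℝ) * P.Δlo)
    (k : ℤ) (j : Fin d → ℤ) (z : ℝ × (Fin d → ℝ)) (hz : z ∈ cell P k j) :
    ENNReal.ofReal ‖steklov d r h f z‖ ≤
      ∑ στ ∈ (Finset.Icc (0 : ℤ) M) ×ˢ (Fintype.piFinset fun _ : Fin d => Finset.Icc (0 : ℤ) M),
        cellSup P f (k + στ.1) (fun i => j i + στ.2 i) := by
  classical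
  set U := Set.univ.pi (fun _ : Fin r => Set.Icc (0 : ℝ) h) with hU
  set V := Set.univ.pi (fun _ : Fin r => Set.univ.pi fun _ : Fin d => Set.Icc (0 : ℝ) h) with hV
  set Sh := (Finset.Icc (0 : ℤ) M) ×ˢ (Fintype.piFinset fun _ : Fin d => Finset.Icc (0 : ℤ) M)
    with hSh
  set A := ∑ στ ∈ Sh, cellSup P f (k + στ.1) (fun i => j i + στ.2 i) with hA
  obtain ⟨hz1, hz2⟩ := hz
  have hsum : ∀ (g : Fin r → ℝ), (∀ i, g i ∈ Set.Icc (0 : ℝ) h) →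
      0 ≤ ∑ i, g i ∧ ∑ i, g i ≤ (r : ℝ) * h := by
    intro g hg
    refine ⟨Finset.sum_nonneg fun i _ => (hg i).1, ?_⟩
    calc ∑ i, g i ≤ ∑ _i : Fin r, h := Finset.sum_le_sum fun i _ => (hg i).2
      _ = (r : ℝ) * h := by simp [Finset.sum_const, Finset.card_univ, nsmul_eq_mul]
  have hgeo : ∀ u ∈ U, ∀ v ∈ V,
      ∃ στ ∈ Sh, (z.1 + ∑ i, u i, fun t => z.2 t + ∑ i, v i t) ∈
        cell P (k + στ.1) (fun i => j i + στ.2 i) := by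
    intro u hu v hv
    rw [hU, Set.mem_univ_pi] at hu
    rw [hV, Set.mem_univ_pi] at hv
    obtain ⟨hu0, hu1⟩ := hsum u hu
    obtain ⟨τ, hτm, hτ1, hτ2⟩ := oneD P.x P.Δlo P.xgap_lo M hM0 k (z.1 + ∑ i, u i)
      (by have := hz1.1; linarith) (by have := hz1.2; linarith)
    have hcoord : ∀ t : Fin d, ∃ σt ∈ Finset.Icc (0 : ℤ) M,
        P.y t (j t + σt - 1) ≤ z.2 t + ∑ i, v i t ∧ z.2 t + ∑ i, v i t < P.y t (j t + σt) := by
      intro t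
      obtain ⟨h0', h1'⟩ := hsum (fun i => v i t) (fun i => (hv i) t (Set.mem_univ t))
      obtain ⟨σt, hm, ha, hb⟩ := oneD (P.y t) P.Δlo (P.ygap_lo t) M hM0 (j t)
        (z.2 t + ∑ i, v i t) (by have := (hz2 t).1; linarith) (by have := (hz2 t).2; linarith)
      exact ⟨σt, hm, ha, hb⟩
    choose σ hσm hσa hσb using hcoord
    refine ⟨(τ, σ), ?_, ⟨⟨hτ1, hτ2⟩, fun t => ⟨hσa t, hσb t⟩⟩⟩
    exact Finset.mem_product.mpr ⟨hτm, Fintype.mem_piFinset.mpr hσm⟩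
  by_cases hAtop : A = ⊤
  · rw [hAtop]; exact le_top
  set B := A.toReal with hB
  have hB0 : 0 ≤ B := ENNReal.toReal_nonneg
  have hAB : A = ENNReal.ofReal B := (ENNReal.ofReal_toReal hAtop).symm
  have hfB : ∀ u ∈ U, ∀ v ∈ V,
      ‖f (z.1 + ∑ i, u i, fun t => z.2 t + ∑ i, v i t)‖ ≤ B := by
    intro u hu v hv
    obtain ⟨στ, hστ, hmem⟩ := hgeo u hu v hv
    have h1 : ENNReal.ofReal ‖f (z.1 + ∑ i, u i, fun t => z.2 t + ∑ i, v i t)‖ ≤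
        cellSup P f (k + στ.1) (fun i => j i + στ.2 i) :=
      le_iSup₂ (f := fun w (_ : w ∈ cell P (k + στ.1) (fun i => j i + στ.2 i)) =>
        ENNReal.ofReal ‖f w‖) _ hmem
    have h2 : ENNReal.ofReal ‖f (z.1 + ∑ i, u i, fun t => z.2 t + ∑ i, v i t)‖ ≤ A :=
      h1.trans (Finset.single_le_sum
        (f := fun στ : ℤ × (Fin d → ℤ) => cellSup P f (k + στ.1) (fun i => j i + στ.2 i))
        (fun _ _ => zero_le) hστ)
    rw [hAB] at h2
    exact (ENNReal.ofReal_le_ofReal_iff hB0).mp h2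
  have hUmeas : MeasurableSet U := MeasurableSet.univ_pi fun _ => measurableSet_Icc
  have hVmeas : MeasurableSet V :=
    MeasurableSet.univ_pi fun _ => MeasurableSet.univ_pi fun _ => measurableSet_Icc
  have hvolU : volume U = ENNReal.ofReal h ^ r := by
    rw [hU, volume_pi_pi]
    simp [Real.volume_Icc, sub_zero]
  have hvolV : volume V = ENNReal.ofReal h ^ (d * r) := by
    rw [hV, volume_pi_pi]
    have hin : volume (Set.univ.pi fun _ : Fin d => Set.Icc (0 : ℝ) h) = ENNReal.ofReal h ^ d := by
      rw [volume_pi_pi]; simp [Real.volume_Icc]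
    rw [Finset.prod_congr rfl fun i _ => hin]
    simp [Finset.prod_const, Finset.card_univ, ← pow_mul]
  have hUfin : volume U < ⊤ := by rw [hvolU]; exact ENNReal.pow_lt_top ENNReal.ofReal_lt_top
  have hVfin : volume V < ⊤ := by rw [hvolV]; exact ENNReal.pow_lt_top ENNReal.ofReal_lt_top
  have htU : (volume U).toReal = h ^ r := by
    rw [hvolU]; simp [ENNReal.toReal_pow, ENNReal.toReal_ofReal hh.le]
  have htV : (volume V).toReal = h ^ (d * r) := by
    rw [hvolV]; simp [ENNReal.toReal_pow, ENNReal.toReal_ofReal hh.le]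
  have hinner : ∀ u ∈ U,
      ‖∫ v in V, f (z.1 + ∑ i, u i, fun t => z.2 t + ∑ i, v i t)‖ ≤ B * (volume V).toReal := by
    intro u hu
    exact norm_setIntegral_le_of_norm_le_const_ae' hVfin
      (Filter.Eventually.of_forall fun v hv => hfB u hu v hv)
  have houter : ‖∫ u in U, ∫ v in V, f (z.1 + ∑ i, u i, fun t => z.2 t + ∑ i, v i t)‖ ≤
      B * (volume V).toReal * (volume U).toReal :=
    norm_setIntegral_le_of_norm_le_const_ae' hUfin
      (Filter.Eventually.of_forall hinner)
  have hpos : (0 : ℝ) < h ^ (r * (d + 1)) := pow_pos hh _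
  have hnorm : ‖steklov d r h f z‖ ≤ B := by
    have hest : ‖steklov d r h f z‖ =
        (h ^ (r * (d + 1)))⁻¹ * ‖∫ u in U, ∫ v in V,
          f (z.1 + ∑ i, u i, fun t => z.2 t + ∑ i, v i t)‖ := by
      rw [steklov, norm_smul, Real.norm_eq_abs, abs_of_pos (inv_pos.mpr hpos), hU, hV]
    rw [hest]
    calc (h ^ (r * (d + 1)))⁻¹ * ‖∫ u in U, ∫ v in V,
          f (z.1 + ∑ i, u i, fun t => z.2 t + ∑ i, v i t)‖ ≤
        (h ^ (r * (d + 1)))⁻¹ * (B * (volume V).toReal * (volume U).toReal) :=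
          mul_le_mul_of_nonneg_left houter (by positivity)
      _ = B := by
          rw [htU, htV, show r * (d + 1) = d * r + r by ring, pow_add]
          have h1 : h ^ (d * r) ≠ 0 := pow_ne_zero _ hh.ne'
          have h2 : h ^ r ≠ 0 := pow_ne_zero _ hh.ne'
          field_simp
  rw [hAB]
  exact ENNReal.ofReal_le_ofReal hnorm
/-- for `1 ≤ p ≤ q < ∞`, `r ∈ ℕ` and `h > 0`, the Steklov mean of an
`f ∈ Λ^{p,q}` again belongs to `Λ^{p,q}`. -/
theorem steklov_mem_lambda
    (d : ℕ) (hd : 1 ≤ d) (p q : ℝ) (hp : 1 ≤ p) (hpq : p ≤ q)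
    (r : ℕ) (hr : 1 ≤ r) (h : ℝ) (hh : 0 < h)
    (f : ℝ × (Fin d → ℝ) → ℂ) (hf : MemLambda d p q f) :
    MemLambda d p q (steklov d r h f) := by
  classical
  obtain ⟨hfm, hfb⟩ := hf
  have hp0 : (0 : ℝ) < p := lt_of_lt_of_le one_pos hp
  have hq0 : (0 : ℝ) < q := lt_of_lt_of_le hp0 hpq
  have he0 : 0 < p / q := div_pos hp0 hq0
  have he1 : p / q ≤ 1 := (div_le_one hq0).mpr hpq
  constructor
  · -- measurability
    have hg : Measurable fun w : ((ℝ × (Fin d → ℝ)) × (Fin r → ℝ)) × (Fin r → (Fin d → ℝ)) =>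
        f (w.1.1.1 + ∑ i, w.1.2 i, fun t => w.1.1.2 t + ∑ i, w.2 i t) := by
      apply hfm.comp
      fun_prop
    have h1 : StronglyMeasurable fun w : (ℝ × (Fin d → ℝ)) × (Fin r → ℝ) =>
        ∫ v in Set.univ.pi (fun _ : Fin r => Set.univ.pi fun _ : Fin d => Set.Icc (0 : ℝ) h),
          f (w.1.1 + ∑ i, w.2 i, fun t => w.1.2 t + ∑ i, v i t) :=
      hg.stronglyMeasurable.integral_prod_right'
    have h2 : StronglyMeasurable fun z : ℝ × (Fin d → ℝ) =>
        ∫ u in Set.univ.pi (fun _ : Fin r => Set.Icc (0 : ℝ) h),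
          ∫ v in Set.univ.pi (fun _ : Fin r => Set.univ.pi fun _ : Fin d => Set.Icc (0 : ℝ) h),
            f (z.1 + ∑ i, u i, fun t => z.2 t + ∑ i, v i t) :=
      h1.integral_prod_right'
    exact (h2.measurable).const_smul ((h ^ (r * (d + 1)))⁻¹ : ℝ)
  · intro P
    set M : ℤ := ⌈((r : ℝ) * h) / P.Δlo⌉ with hM
    have hM0 : 0 ≤ M := Int.ceil_nonneg (div_nonneg (by positivity) P.Δlo_pos.le)
    have hMh : (r : ℝ) * h ≤ (M : ℝ) * P.Δlo := (div_le_iff₀ P.Δlo_pos).mp (Int.le_ceil _)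
    set Sh := (Finset.Icc (0 : ℤ) M) ×ˢ (Fintype.piFinset fun _ : Fin d => Finset.Icc (0 : ℤ) M)
      with hSh
    have hShne : Sh.Nonempty := ⟨(0, fun _ => 0), Finset.mem_product.mpr
      ⟨Finset.mem_Icc.mpr ⟨le_refl _, hM0⟩,
        Fintype.mem_piFinset.mpr fun _ => Finset.mem_Icc.mpr ⟨le_refl _, hM0⟩⟩⟩
    set K : ℝ≥0∞ := (Sh.card : ℝ≥0∞) ^ q * ENNReal.ofReal ((P.Δhi / P.Δlo) ^ (d + 1)) with hK
    have hKne : K ≠ ⊤ := ENNReal.mul_ne_top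
      (ENNReal.rpow_ne_top_of_nonneg hq0.le (ENNReal.natCast_ne_top _)) ENNReal.ofReal_ne_top
    have hrow : ∀ k : ℤ, rowSum P (steklov d r h f) q k ≤
        K * ∑ στ ∈ Sh, rowSum P f q (k + στ.1) := by
      intro k
      have hterm : ∀ j : Fin d → ℤ,
          cellSup P (steklov d r h f) k j ^ q * ENNReal.ofReal (cellVol P k j) ≤
          ∑ στ ∈ Sh, K * (cellSup P f (k + στ.1) (fun i => j i + στ.2 i) ^ q *
            ENNReal.ofReal (cellVol P (k + στ.1) (fun i => j i + στ.2 i))) := by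
        intro j
        have hsupA : cellSup P (steklov d r h f) k j ≤
            ∑ στ ∈ Sh, cellSup P f (k + στ.1) (fun i => j i + στ.2 i) :=
          iSup₂_le fun z hz => steklov_pointwise hh f P M hM0 hMh k j z hz
        obtain ⟨x0, hx0, hx0e⟩ := Finset.exists_mem_eq_sup Sh hShne
          (fun στ : ℤ × (Fin d → ℤ) => cellSup P f (k + στ.1) (fun i => j i + στ.2 i))
        have h1 : (∑ στ ∈ Sh, cellSup P f (k + στ.1) (fun i => j i + στ.2 i)) ≤
            (Sh.card : ℝ≥0∞) * cellSup P f (k + x0.1) (fun i => j i + x0.2 i) := by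
          have h2 := Finset.sum_le_card_nsmul Sh
            (fun στ : ℤ × (Fin d → ℤ) => cellSup P f (k + στ.1) (fun i => j i + στ.2 i))
            (Sh.sup fun στ : ℤ × (Fin d → ℤ) => cellSup P f (k + στ.1) (fun i => j i + στ.2 i))
            (fun x hx => Finset.le_sup (f := fun στ : ℤ × (Fin d → ℤ) => cellSup P f (k + στ.1) (fun i => j i + στ.2 i)) hx)
          rw [hx0e, nsmul_eq_mul] at h2
          exact h2
        have h3 : cellSup P (steklov d r h f) k j ^ q ≤
            (Sh.card : ℝ≥0∞) ^ q * ∑ στ ∈ Sh,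
              cellSup P f (k + στ.1) (fun i => j i + στ.2 i) ^ q := by
          calc cellSup P (steklov d r h f) k j ^ q
              ≤ ((Sh.card : ℝ≥0∞) * cellSup P f (k + x0.1) (fun i => j i + x0.2 i)) ^ q :=
                ENNReal.rpow_le_rpow (hsupA.trans h1) hq0.le
            _ = (Sh.card : ℝ≥0∞) ^ q * cellSup P f (k + x0.1) (fun i => j i + x0.2 i) ^ q :=
                ENNReal.mul_rpow_of_nonneg _ _ hq0.le
            _ ≤ _ := mul_le_mul_right (Finset.single_le_sum
                (f := fun στ : ℤ × (Fin d → ℤ) =>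
                  cellSup P f (k + στ.1) (fun i => j i + στ.2 i) ^ q)
                (fun _ _ => zero_le) hx0) _
        calc cellSup P (steklov d r h f) k j ^ q * ENNReal.ofReal (cellVol P k j)
            ≤ ((Sh.card : ℝ≥0∞) ^ q * ∑ στ ∈ Sh,
                cellSup P f (k + στ.1) (fun i => j i + στ.2 i) ^ q) *
              ENNReal.ofReal (cellVol P k j) := mul_le_mul_left h3 _
          _ = ∑ στ ∈ Sh, (Sh.card : ℝ≥0∞) ^ q *
                cellSup P f (k + στ.1) (fun i => j i + στ.2 i) ^ q *
                ENNReal.ofReal (cellVol P k j) := by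
              rw [Finset.mul_sum, Finset.sum_mul]
          _ ≤ ∑ στ ∈ Sh, K * (cellSup P f (k + στ.1) (fun i => j i + στ.2 i) ^ q *
                ENNReal.ofReal (cellVol P (k + στ.1) (fun i => j i + στ.2 i))) := by
              apply Finset.sum_le_sum
              intro στ _
              calc (Sh.card : ℝ≥0∞) ^ q * cellSup P f (k + στ.1) (fun i => j i + στ.2 i) ^ q *
                    ENNReal.ofReal (cellVol P k j)
                  ≤ (Sh.card : ℝ≥0∞) ^ q * cellSup P f (k + στ.1) (fun i => j i + στ.2 i) ^ q *
                    (ENNReal.ofReal ((P.Δhi / P.Δlo) ^ (d + 1)) *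
                      ENNReal.ofReal (cellVol P (k + στ.1) (fun i => j i + στ.2 i))) :=
                    mul_le_mul_right (cellVol_ratio P k (k + στ.1) j _) _
                _ = K * (cellSup P f (k + στ.1) (fun i => j i + στ.2 i) ^ q *
                      ENNReal.ofReal (cellVol P (k + στ.1) (fun i => j i + στ.2 i))) := by
                    rw [hK]; ring
      calc rowSum P (steklov d r h f) q k
          ≤ ∑' j : Fin d → ℤ, ∑ στ ∈ Sh, K *
              (cellSup P f (k + στ.1) (fun i => j i + στ.2 i) ^ q *
                ENNReal.ofReal (cellVol P (k + στ.1) (fun i => j i + στ.2 i))) :=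
            ENNReal.tsum_le_tsum hterm
        _ = ∑ στ ∈ Sh, ∑' j : Fin d → ℤ, K *
              (cellSup P f (k + στ.1) (fun i => j i + στ.2 i) ^ q *
                ENNReal.ofReal (cellVol P (k + στ.1) (fun i => j i + στ.2 i))) :=
            Summable.tsum_finsetSum fun _ _ => ENNReal.summable
        _ = ∑ στ ∈ Sh, K * rowSum P f q (k + στ.1) := by
            apply Finset.sum_congr rfl
            intro στ _
            rw [ENNReal.tsum_mul_left]
            congr 1
            exact (Equiv.addRight στ.2).tsum_eq fun j' =>
              cellSup P f (k + στ.1) j' ^ q * ENNReal.ofReal (cellVol P (k + στ.1) j')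
        _ = K * ∑ στ ∈ Sh, rowSum P f q (k + στ.1) := (Finset.mul_sum _ _ _).symm
    have hfP := hfb P
    rw [discNorm_eq] at hfP
    have hX : (∑' k : ℤ, rowSum P f q k ^ (p / q)) ≠ ⊤ := by
      intro hc
      rw [hc, ENNReal.top_rpow_of_pos (by positivity)] at hfP
      exact lt_irrefl _ hfP
    have hk1 : ∀ k : ℤ, rowSum P (steklov d r h f) q k ^ (p / q) ≤
        K ^ (p / q) * ∑ στ ∈ Sh, rowSum P f q (k + στ.1) ^ (p / q) := by
      intro k
      calc rowSum P (steklov d r h f) q k ^ (p / q)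
          ≤ (K * ∑ στ ∈ Sh, rowSum P f q (k + στ.1)) ^ (p / q) :=
            ENNReal.rpow_le_rpow (hrow k) he0.le
        _ = K ^ (p / q) * (∑ στ ∈ Sh, rowSum P f q (k + στ.1)) ^ (p / q) :=
            ENNReal.mul_rpow_of_nonneg _ _ he0.le
        _ ≤ K ^ (p / q) * ∑ στ ∈ Sh, rowSum P f q (k + στ.1) ^ (p / q) :=
            mul_le_mul_right (rpow_finset_sum_le _ _ he0 he1) _
    have hshift : ∀ στ : ℤ × (Fin d → ℤ),
        (∑' k : ℤ, rowSum P f q (k + στ.1) ^ (p / q)) =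
          ∑' k : ℤ, rowSum P f q k ^ (p / q) :=
      fun στ => (Equiv.addRight στ.1).tsum_eq fun k => rowSum P f q k ^ (p / q)
    have htot : (∑' k : ℤ, rowSum P (steklov d r h f) q k ^ (p / q)) ≤
        K ^ (p / q) * ((Sh.card : ℝ≥0∞) * ∑' k : ℤ, rowSum P f q k ^ (p / q)) := by
      calc (∑' k : ℤ, rowSum P (steklov d r h f) q k ^ (p / q))
          ≤ ∑' k : ℤ, K ^ (p / q) * ∑ στ ∈ Sh, rowSum P f q (k + στ.1) ^ (p / q) :=
            ENNReal.tsum_le_tsum hk1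
        _ = K ^ (p / q) * ∑' k : ℤ, ∑ στ ∈ Sh, rowSum P f q (k + στ.1) ^ (p / q) :=
            ENNReal.tsum_mul_left
        _ = K ^ (p / q) * ∑ στ ∈ Sh, ∑' k : ℤ, rowSum P f q (k + στ.1) ^ (p / q) := by
            rw [Summable.tsum_finsetSum fun _ _ => ENNReal.summable]
        _ = K ^ (p / q) * ((Sh.card : ℝ≥0∞) * ∑' k : ℤ, rowSum P f q k ^ (p / q)) := by
            rw [Finset.sum_congr rfl fun στ _ => hshift στ, Finset.sum_const, nsmul_eq_mul]
    have hfin : (∑' k : ℤ, rowSum P (steklov d r h f) q k ^ (p / q)) < ⊤ := by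
      apply lt_of_le_of_lt htot
      exact lt_top_iff_ne_top.mpr (ENNReal.mul_ne_top
        (ENNReal.rpow_ne_top_of_nonneg he0.le hKne)
        (ENNReal.mul_ne_top (ENNReal.natCast_ne_top _) hX))
    rw [discNorm_eq]
    exact ENNReal.rpow_lt_top_of_nonneg (by positivity) hfin.ne
end
end
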